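/- arXiv:0908.2201 — 14 statements merged into one kernel-verified Lean document; each statement's English description precedes it below -/
import Mathlib

section
/- An n×n complex matrix T is unitarily equivalent to a complex symmetric matrix if and only if there exists a conjugation C on ℂⁿ such that the linear operator on ℂⁿ induced by T is C-symmetric, i.e., T = C T* C as operators (where T* is the conjugate transpose of T). -/
noncomputable section
open scoped InnerProductSpace
open Matrix

/-- `ℂⁿ` with the standard Hermitian inner product. -/
abbrev Euc (n : ℕ) := EuclideanSpace ℂ (Fin n)

/-- A conjugation on `ℂⁿ`: conjugate-linear (additive and conjugate-homogeneous),
involutive, and isometric. -/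
def IsConjugation {n : ℕ} (C : Euc n → Euc n) : Prop :=
  (∀ x y, C (x + y) = C x + C y) ∧
  (∀ (a : ℂ) (x : Euc n), C (a • x) = (starRingEnd ℂ a) • C x) ∧
  (∀ x, C (C x) = x) ∧
  (∀ x y : Euc n, ⟪x, y⟫_ℂ = ⟪C y, C x⟫_ℂ)

/-- `T` is unitarily equivalent to a complex symmetric matrix. -/
def UECSM {n : ℕ} (T : Matrix (Fin n) (Fin n) ℂ) : Prop :=
  ∃ U : Matrix (Fin n) (Fin n) ℂ, U ∈ Matrix.unitaryGroup (Fin n) ℂ ∧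
    (Uᴴ * T * U)ᵀ = Uᴴ * T * U

section Aux
variable {n : ℕ}

lemma starMulVec (M : Matrix (Fin n) (Fin n) ℂ) (v : Fin n → ℂ) :
    star (M *ᵥ v) = M.map (starRingEnd ℂ) *ᵥ star v := by
  ext i
  simp [Matrix.mulVec, dotProduct, Matrix.map_apply, star_sum]

lemma mapmap (M : Matrix (Fin n) (Fin n) ℂ) :
    (M.map (starRingEnd ℂ)).map (starRingEnd ℂ) = M := by
  ext i j; simp

lemma forward (T U : Matrix (Fin n) (Fin n) ℂ) (hU : U ∈ Matrix.unitaryGroup (Fin n) ℂ)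
    (hsym : (Uᴴ * T * U)ᵀ = Uᴴ * T * U) :
    ∃ C : Euc n → Euc n, IsConjugation C ∧
      ∀ x : Euc n, Matrix.toEuclideanLin T x = C (Matrix.toEuclideanLin Tᴴ (C x)) := by
  have hU1 : Uᴴ * U = 1 := by
    simpa [Matrix.star_eq_conjTranspose] using Matrix.mem_unitaryGroup_iff'.mp hU
  have hU2 : U * Uᴴ = 1 := by
    simpa [Matrix.star_eq_conjTranspose] using Matrix.mem_unitaryGroup_iff.mp hU
  refine ⟨fun x => WithLp.toLp 2 (U *ᵥ star (Uᴴ *ᵥ (x : Fin n → ℂ)) : Fin n → ℂ), ⟨?_, ?_, ?_, ?_⟩, ?_⟩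
  · intro x y
    apply WithLp.ofLp_injective 2
    show (U *ᵥ star (Uᴴ *ᵥ ((x : Fin n → ℂ) + (y : Fin n → ℂ))) : Fin n → ℂ)
      = (U *ᵥ star (Uᴴ *ᵥ (x : Fin n → ℂ)) : Fin n → ℂ) + (U *ᵥ star (Uᴴ *ᵥ (y : Fin n → ℂ)))
    rw [Matrix.mulVec_add, star_add, Matrix.mulVec_add]
  · intro a x
    apply WithLp.ofLp_injective 2
    show (U *ᵥ star (Uᴴ *ᵥ (a • (x : Fin n → ℂ))) : Fin n → ℂ)
      = (starRingEnd ℂ a) • (U *ᵥ star (Uᴴ *ᵥ (x : Fin n → ℂ)) : Fin n → ℂ)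
    rw [Matrix.mulVec_smul, star_smul, Matrix.mulVec_smul]
    rfl
  · intro x
    apply WithLp.ofLp_injective 2
    show (U *ᵥ star (Uᴴ *ᵥ (U *ᵥ star (Uᴴ *ᵥ (x : Fin n → ℂ)))) : Fin n → ℂ) = x
    rw [Matrix.mulVec_mulVec, hU1, Matrix.one_mulVec, star_star, Matrix.mulVec_mulVec, hU2,
      Matrix.one_mulVec]
  · intro x y
    show (y : Fin n → ℂ) ⬝ᵥ star (x : Fin n → ℂ) =
      (U *ᵥ star (Uᴴ *ᵥ (x : Fin n → ℂ))) ⬝ᵥ star (U *ᵥ star (Uᴴ *ᵥ (y : Fin n → ℂ)))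
    rw [dotProduct_comm, dotProduct_comm (U *ᵥ _)]
    rw [Matrix.star_mulVec, star_star,
      Matrix.dotProduct_mulVec, Matrix.vecMul_vecMul, hU1, Matrix.vecMul_one,
      Matrix.star_mulVec, conjTranspose_conjTranspose, dotProduct_comm,
      dotProduct_comm (Uᴴ *ᵥ (y : Fin n → ℂ)), Matrix.dotProduct_mulVec,
      Matrix.vecMul_vecMul, hU2, Matrix.vecMul_one, dotProduct_comm ((y : Fin n → ℂ))]
  · intro x
    apply WithLp.ofLp_injective 2
    show (T *ᵥ (x : Fin n → ℂ) : Fin n → ℂ)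
      = U *ᵥ star (Uᴴ *ᵥ (Tᴴ *ᵥ (U *ᵥ star (Uᴴ *ᵥ (x : Fin n → ℂ)))))
    rw [Matrix.mulVec_mulVec, Matrix.mulVec_mulVec]
    have hS : Uᴴ * Tᴴ * U = (Uᴴ * T * U).map (starRingEnd ℂ) := by
      have h1 : (Uᴴ * T * U)ᴴ = Uᴴ * Tᴴ * U := by
        simp [Matrix.conjTranspose_mul, Matrix.mul_assoc]
      have h2 : (Uᴴ * T * U)ᴴ = ((Uᴴ * T * U)ᵀ).map (starRingEnd ℂ) := rfl
      rw [← h1, h2, hsym]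
    rw [hS, starMulVec, mapmap, star_star, Matrix.mulVec_mulVec, Matrix.mulVec_mulVec]
    have hT : U * (Uᴴ * T * U) * Uᴴ = T := by
      calc U * (Uᴴ * T * U) * Uᴴ = (U * Uᴴ) * T * (U * Uᴴ) := by
            simp only [Matrix.mul_assoc]
        _ = T := by rw [hU2, Matrix.one_mul, Matrix.mul_one]
    rw [hT]


set_option maxHeartbeats 2000000 in
lemma backward (T : Matrix (Fin n) (Fin n) ℂ) (C : Euc n → Euc n) (h : IsConjugation C)
    (hC : ∀ x : Euc n, Matrix.toEuclideanLin T x = C (Matrix.toEuclideanLin Tᴴ (C x))) :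
    UECSM T := by
  obtain ⟨hadd, hsmul, hinv, hisom⟩ := h
  -- basic consequences
  have hC0 : C 0 = 0 := by
    have h0 := hadd 0 0
    rw [add_zero] at h0
    exact (left_eq_add.mp h0)
  have hcoe : ∀ (r : ℝ) (x : Euc n), (r : ℂ) • x = r • x := by
    intro r x; ext i; simp [Complex.real_smul]
  have hrsmul : ∀ (r : ℝ) (x : Euc n), C (r • x) = r • C x := by
    intro r x
    rw [← hcoe, hsmul, Complex.conj_ofReal, hcoe]
  have hneg : ∀ x : Euc n, C (-x) = - C x := by
    intro x
    have := hsmul (-1) x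
    simpa using this
  have hsub : ∀ x y : Euc n, C (x - y) = C x - C y := by
    intro x y
    rw [sub_eq_add_neg, hadd, hneg, sub_eq_add_neg]
  have hswap : ∀ x z : Euc n, ⟪x, C z⟫_ℂ = ⟪z, C x⟫_ℂ := by
    intro x z
    rw [hisom x (C z), hinv]
  -- the fixed-point subspace
  let K : Submodule ℝ (Euc n) :=
    { carrier := {x | C x = x}
      add_mem' := fun {x y} hx hy => by
        simp only [Set.mem_setOf_eq] at *
        rw [hadd, hx, hy]
      zero_mem' := hC0
      smul_mem' := fun r x hx => by
        simp only [Set.mem_setOf_eq] at *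
        rw [hrsmul, hx] }
  have memK : ∀ x : Euc n, x ∈ K ↔ C x = x := fun x => Iff.rfl
  -- multiplication by I as a real-linear equivalence
  let mulI : Euc n ≃ₗ[ℝ] Euc n :=
    { toFun := fun x => Complex.I • x
      invFun := fun x => (-Complex.I) • x
      map_add' := fun x y => smul_add _ _ _
      map_smul' := fun r x => smul_comm _ _ _
      left_inv := fun x => by
        show (-Complex.I) • (Complex.I • x) = x
        rw [smul_smul]
        norm_num [Complex.I_mul_I]
      right_inv := fun x => by
        show Complex.I • ((-Complex.I) • x) = x
        rw [smul_smul]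
        norm_num [Complex.I_mul_I] }
  let J : Submodule ℝ (Euc n) := K.map (mulI : Euc n →ₗ[ℝ] Euc n)
  -- sup is everything
  have hsup : K ⊔ J = ⊤ := by
    rw [eq_top_iff]
    rintro x -
    apply Submodule.mem_sup.mpr
    set a : Euc n := ((2:ℂ))⁻¹ • (x + C x) with ha_def
    set b : Euc n := ((2:ℂ))⁻¹ • (x - C x) with hb_def
    have haK : a ∈ K := by
      rw [memK, ha_def, hsmul, hadd, hinv, map_inv₀, Complex.conj_ofNat, add_comm]
    have hCb : C b = -b := by
      rw [hb_def, hsmul, hsub, hinv, map_inv₀, Complex.conj_ofNat, ← smul_neg, neg_sub]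
    have hcK : (-Complex.I) • b ∈ K := by
      rw [memK, hsmul, hCb]
      simp
    refine ⟨a, haK, Complex.I • ((-Complex.I) • b), ⟨(-Complex.I) • b, hcK, rfl⟩, ?_⟩
    have hIb : Complex.I • ((-Complex.I) • b) = b := by
      rw [smul_smul]
      norm_num [Complex.I_mul_I]
    rw [hIb, ha_def, hb_def, ← smul_add, add_add_sub_cancel, ← two_smul ℂ x, smul_smul]
    norm_num
  -- inf is trivial
  have hinf : K ⊓ J = ⊥ := by
    rw [eq_bot_iff]
    rintro x ⟨hxK, y, hyK, rfl⟩
    have hy : C y = y := hyK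
    have hx : C (Complex.I • y) = Complex.I • y := hxK
    rw [hsmul, hy, Complex.conj_I] at hx
    have h4 : (Complex.I - -Complex.I) • y = 0 := by
      rw [sub_smul, hx, sub_self]
    have hy0 : y = 0 := by
      rcases smul_eq_zero.mp h4 with h | h
      · exfalso
        rw [sub_neg_eq_add, ← two_mul] at h
        simpa [Complex.ext_iff] using h
      · exact h
    rw [hy0]
    simp
  -- dimension count
  have hdimE : Module.finrank ℝ (Euc n) = 2 * n := by
    have h := Module.finrank_mul_finrank ℝ ℂ (Euc n)
    rw [Complex.finrank_real_complex, finrank_euclideanSpace_fin] at h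
    omega
  have hJK : Module.finrank ℝ J = Module.finrank ℝ K := LinearEquiv.finrank_map_eq mulI K
  have hdimK : Module.finrank ℝ K = n := by
    have hh := Submodule.finrank_sup_add_finrank_inf_eq K J
    rw [hsup, hinf, finrank_top, finrank_bot, hdimE, hJK] at hh
    omega
  let bK : OrthonormalBasis (Fin n) ℝ K := (stdOrthonormalBasis ℝ K).reindex (finCongr hdimK)
  let e : Fin n → Euc n := fun i => (bK i : Euc n)
  have heK : ∀ i, C (e i) = e i := fun i => (bK i).2
  have hre : ∀ x y : Euc n, ⟪x, y⟫_ℝ = (⟪x, y⟫_ℂ).re := by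
    intro x y; simp [PiLp.inner_apply, RCLike.inner_apply, Complex.re_sum]
  have hrealinner : ∀ x y : Euc n, C x = x → C y = y →
      ⟪x, y⟫_ℂ = ((⟪x, y⟫_ℂ).re : ℂ) := by
    intro x y hx hy
    have h1 : (starRingEnd ℂ) ⟪x, y⟫_ℂ = ⟪x, y⟫_ℂ := by
      calc (starRingEnd ℂ) ⟪x, y⟫_ℂ = ⟪y, x⟫_ℂ := inner_conj_symm y x
        _ = ⟪C x, C y⟫_ℂ := hisom y x
        _ = ⟪x, y⟫_ℂ := by rw [hx, hy]
    exact (Complex.conj_eq_iff_re.mp h1).symm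
  have heon : ∀ i j, ⟪e i, e j⟫_ℂ = if i = j then 1 else 0 := by
    intro i j
    have h1 := orthonormal_iff_ite.mp bK.orthonormal i j
    rw [Submodule.coe_inner] at h1
    rw [hrealinner _ _ (heK i) (heK j), ← hre, h1]
    split <;> norm_num
  let U : Matrix (Fin n) (Fin n) ℂ := Matrix.of fun k i => e i k
  have hentry : ∀ (A : Matrix (Fin n) (Fin n) ℂ) (i j : Fin n),
      (Uᴴ * A * U) i j = ⟪e i, Matrix.toEuclideanLin A (e j)⟫_ℂ := by
    intro A i j
    show _ = (A *ᵥ (e j : Fin n → ℂ)) ⬝ᵥ star (e i : Fin n → ℂ)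
    rw [dotProduct_comm, Matrix.dotProduct_mulVec]
    simp [U, Matrix.mul_apply, Matrix.vecMul, dotProduct, Matrix.conjTranspose_apply,
      Finset.sum_mul, mul_assoc]
  have hUmem : U ∈ Matrix.unitaryGroup (Fin n) ℂ := by
    apply Matrix.mem_unitaryGroup_iff'.mpr
    rw [Matrix.star_eq_conjTranspose]
    ext i j
    have h2 : (Uᴴ * U) i j = ⟪e i, e j⟫_ℂ := by
      simp [U, Matrix.mul_apply, Matrix.conjTranspose_apply, PiLp.inner_apply,
        RCLike.inner_apply]
      exact Finset.sum_congr rfl fun _ _ => mul_comm _ _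
    rw [h2, heon, Matrix.one_apply]
  refine ⟨U, hUmem, ?_⟩
  ext i j
  rw [Matrix.transpose_apply, hentry, hentry]
  calc ⟪e j, Matrix.toEuclideanLin T (e i)⟫_ℂ
      = ⟪e j, C (Matrix.toEuclideanLin Tᴴ (e i))⟫_ℂ := by rw [hC, heK]
    _ = ⟪Matrix.toEuclideanLin Tᴴ (e i), C (e j)⟫_ℂ := hswap _ _
    _ = ⟪Matrix.toEuclideanLin Tᴴ (e i), e j⟫_ℂ := by rw [heK]
    _ = ⟪e i, Matrix.toEuclideanLin T (e j)⟫_ℂ := by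
        rw [Matrix.toEuclideanLin_conjTranspose_eq_adjoint, LinearMap.adjoint_inner_left]


end Aux

/-- An `n × n` complex matrix `T` is unitarily equivalent to a complex symmetric matrix
iff there is a conjugation `C` on `ℂⁿ` with `T = C T* C` as operators. -/
theorem uecsm_iff_exists_conjugation {n : ℕ} (T : Matrix (Fin n) (Fin n) ℂ) :
    UECSM T ↔ ∃ C : Euc n → Euc n, IsConjugation C ∧
      ∀ x : Euc n, Matrix.toEuclideanLin T x = C (Matrix.toEuclideanLin Tᴴ (C x)) := by
  constructor
  · rintro ⟨U, hU, hsym⟩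
    exact forward T U hU hsym
  · rintro ⟨C, h, hC⟩
    exact backward T C h hC
end
end

section
/- If C is a conjugation on ℂⁿ, then there exists an orthonormal basis {e_i}_{i=1}^n of ℂⁿ such that C e_i = e_i for all i. -/
noncomputable section
open scoped InnerProductSpace
open Matrix

/-- If `C` is a conjugation on `ℂⁿ`, then there exists an orthonormal basis `{e_i}`
of `ℂⁿ` with `C e_i = e_i` for all `i`. -/
theorem exists_creal_orthonormalBasis {n : ℕ} (C : Euc n → Euc n)
    (hC : IsConjugation C) :
    ∃ e : OrthonormalBasis (Fin n) ℂ (Euc n), ∀ i, C (e i) = e i := by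
  obtain ⟨hadd, hsmul, hinv, hisom⟩ := hC
  have h0 : C 0 = 0 := by
    have := hsmul 0 0
    simpa using this
  -- the real subspace of C-fixed vectors
  set V : Submodule ℝ (Euc n) :=
    { carrier := {x | C x = x}
      add_mem' := by
        intro a b ha hb
        simp only [Set.mem_setOf_eq] at *
        rw [hadd, ha, hb]
      zero_mem' := h0
      smul_mem' := by
        intro r x hx
        simp only [Set.mem_setOf_eq] at *
        have h1 : r • x = (r : ℂ) • x := (Complex.coe_smul r x).symm
        rw [h1, hsmul, hx]
        simp } with hV
  have memV : ∀ x, x ∈ V ↔ C x = x := fun x => Iff.rfl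
  -- inner products of fixed vectors are real
  have hreal : ∀ x y : Euc n, C x = x → C y = y →
      ⟪x, y⟫_ℂ = (⟪x, y⟫_ℂ).re := by
    intro x y hx hy
    have h1 : ⟪x, y⟫_ℂ = ⟪y, x⟫_ℂ := by rw [hisom x y, hx, hy]
    have h2 : (starRingEnd ℂ) ⟪x, y⟫_ℂ = ⟪x, y⟫_ℂ := by
      rw [← inner_conj_symm y x] at h1
      exact h1.symm
    exact (Complex.conj_eq_iff_re.mp h2).symm
  -- orthonormal real basis of V
  let b := stdOrthonormalBasis ℝ V
  set m := Module.finrank ℝ V with hm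
  let f : Fin m → Euc n := fun i => (b i : Euc n)
  have hfV : ∀ i, C (f i) = f i := fun i => (b i).2
  -- f is ℂ-orthonormal
  have hon : Orthonormal ℂ f := by
    rw [orthonormal_iff_ite]
    intro i j
    have hb := orthonormal_iff_ite.mp b.orthonormal i j
    rw [Submodule.coe_inner] at hb
    have h1 : ⟪f i, f j⟫_ℝ = (⟪f i, f j⟫_ℂ).re := by
      set_option linter.unnecessarySimpa false in
      simp only [PiLp.inner_apply, Complex.re_sum, RCLike.inner_apply, real_inner_eq_re_inner]
      rfl
    have h2 : (⟪f i, f j⟫_ℂ).re = if i = j then 1 else 0 := by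
      rw [← h1]; exact hb
    rw [hreal (f i) (f j) (hfV i) (hfV j), h2]
    split <;> norm_num
  -- f spans
  have hspan : ⊤ ≤ Submodule.span ℂ (Set.range f) := by
    intro x _
    set S := Submodule.span ℂ (Set.range f) with hS
    have hVS : ∀ w : Euc n, C w = w → w ∈ S := by
      intro w hw
      have hw' : (⟨w, hw⟩ : V) ∈ Submodule.span ℝ (Set.range b) := by
        have hr : Set.range ⇑b.toBasis = Set.range ⇑b := by rw [b.coe_toBasis]
        have := b.toBasis.mem_span (⟨w, hw⟩ : V)
        rwa [hr] at this
      have : w ∈ Submodule.map V.subtype (Submodule.span ℝ (Set.range b)) :=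
        ⟨⟨w, hw⟩, hw', rfl⟩
      rw [Submodule.map_span] at this
      have himg : V.subtype '' Set.range b = Set.range f := by
        ext z
        simp only [Set.mem_image, Set.mem_range]
        constructor
        · rintro ⟨_, ⟨i, rfl⟩, rfl⟩; exact ⟨i, rfl⟩
        · rintro ⟨i, rfl⟩; exact ⟨b i, ⟨i, rfl⟩, rfl⟩
      rw [himg] at this
      exact Submodule.span_le_restrictScalars ℝ ℂ _ this
    -- decompose x = u + I • v with u, v fixed
    set u : Euc n := (1/2 : ℂ) • (x + C x) with hu
    set v : Euc n := (-(Complex.I)/2) • (x - C x) with hv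
    have hCu : C u = u := by
      have hc : (starRingEnd ℂ) (1/2 : ℂ) = 1/2 := by
        simp [Complex.ext_iff]
      rw [hu, hsmul, hadd, hinv, hc, add_comm (C x) x]
    have hCv : C v = v := by
      have hsub : C (x - C x) = C x - x := by
        have := hadd x (-C x)
        have hneg : C (-C x) = - x := by
          have := hsmul (-1) (C x)
          simpa [hinv] using this
        simpa [sub_eq_add_neg, hneg] using hadd x (-(C x))
      have hc2 : (starRingEnd ℂ) (-Complex.I/2) = Complex.I/2 := by
        rw [map_div₀, map_neg, Complex.conj_I, map_ofNat]
        ring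
      rw [hv, hsmul, hsub, hc2]
      module
    have hx : x = u + Complex.I • v := by
      rw [hu, hv, smul_smul]
      have : Complex.I * (-(Complex.I)/2) = 1/2 := by
        simp [Complex.ext_iff]
        norm_num
      rw [this]
      module
    rw [hx]
    exact S.add_mem (hVS u hCu) (S.smul_mem _ (hVS v hCv))
  -- build the orthonormal basis
  let e0 : OrthonormalBasis (Fin m) ℂ (Euc n) := OrthonormalBasis.mk hon hspan
  have hmn : m = n := by
    have h1 := Module.finrank_eq_card_basis e0.toBasis
    simpa [finrank_euclideanSpace_fin] using h1.symm
  refine ⟨e0.reindex (finCongr hmn), fun i => ?_⟩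
  have : e0.reindex (finCongr hmn) i = e0 ((finCongr hmn).symm i) := by
    simp [OrthonormalBasis.reindex_apply]
  rw [this]
  have he0 : ∀ j, e0 j = f j := fun j => OrthonormalBasis.coe_mk hon hspan ▸ rfl
  rw [he0]
  exact hfV _
end
end

section
/- If A is an n×n self-adjoint complex matrix and C is a conjugation on ℂⁿ such that A is C-symmetric (i.e., A = C A* C = C A C as operators on ℂⁿ), then there exists an orthonormal basis {e_i}_{i=1}^n of ℂⁿ consisting of eigenvectors of A such that C e_i = e_i for all i. -/
noncomputable section
open scoped InnerProductSpace
open Matrix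

set_option maxHeartbeats 1000000 in
lemma real_inner_eq_re {n : ℕ} (x y : Euc n) : ⟪x, y⟫_ℝ = Complex.re ⟪x, y⟫_ℂ := by
  simp [PiLp.inner_apply, Complex.inner, map_sum]

set_option maxHeartbeats 1000000 in
/-- If `A` is a self-adjoint `n × n` matrix which is `C`-symmetric (for self-adjoint `A`
this reads `A = C A C` as operators), then there is a `C`-real orthonormal basis
consisting of eigenvectors of `A`. -/
theorem exists_creal_orthonormalBasis_of_eigenvectors {n : ℕ}
    (A : Matrix (Fin n) (Fin n) ℂ) (hA : A.IsHermitian)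
    (C : Euc n → Euc n) (hC : IsConjugation C)
    (hsym : ∀ x : Euc n, Matrix.toEuclideanLin A x = C (Matrix.toEuclideanLin A (C x))) :
    ∃ e : OrthonormalBasis (Fin n) ℂ (Euc n),
      (∀ i, ∃ μ : ℂ, Matrix.toEuclideanLin A (e i) = μ • e i) ∧
      (∀ i, C (e i) = e i) := by
  obtain ⟨hadd, hsmul, hinv, hisom⟩ := hC
  set T0 : Euc n →ₗ[ℂ] Euc n := Matrix.toEuclideanLin A with hT0
  -- C is ℝ-linear
  have hCreal : ∀ (r : ℝ) (x : Euc n), C (r • x) = r • C x := by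
    intro r x
    have h1 : r • x = (r : ℂ) • x := (algebraMap_smul ℂ r x).symm
    have h2 : r • C x = (r : ℂ) • C x := (algebraMap_smul ℂ r (C x)).symm
    rw [h1, h2, hsmul, Complex.conj_ofReal]
  let Cl : Euc n →ₗ[ℝ] Euc n :=
    { toFun := C, map_add' := hadd, map_smul' := hCreal }
  set V : Submodule ℝ (Euc n) := LinearMap.eqLocus Cl LinearMap.id with hV
  have hmemV : ∀ x : Euc n, x ∈ V ↔ C x = x := fun x => Iff.rfl
  -- A is symmetric
  have hAsym : T0.IsSymmetric := isHermitian_iff_isSymmetric.mp hA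
  -- T0 maps V to V
  have hmaps : ∀ x ∈ V, (T0.restrictScalars ℝ) x ∈ V := by
    intro x hx
    have hx' : C x = x := hx
    have := hsym x
    rw [hx'] at this
    exact this.symm
  set T : V →ₗ[ℝ] V := (T0.restrictScalars ℝ).restrict hmaps with hT
  -- inner products of C-fixed vectors are real
  have hreal : ∀ x y : Euc n, C x = x → C y = y → ⟪x, y⟫_ℂ = (⟪x, y⟫_ℝ : ℂ) := by
    intro x y hx hy
    have h1 : ⟪x, y⟫_ℂ = ⟪y, x⟫_ℂ := by rw [hisom x y, hx, hy]
    have h2 : (starRingEnd ℂ) ⟪x, y⟫_ℂ = ⟪x, y⟫_ℂ := by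
      rw [inner_conj_symm]; exact h1.symm
    rw [Complex.conj_eq_iff_re] at h2
    rw [real_inner_eq_re, h2]
  -- T is symmetric over ℝ
  have hTsym : @LinearMap.IsSymmetric ℝ V _ _ (Submodule.innerProductSpace V) T := by
    intro x y
    have hx : C (x : Euc n) = x := x.2
    have hy : C (y : Euc n) = y := y.2
    have h1 : (⟪T x, y⟫_ℝ : ℝ) = ⟪(T x : Euc n), (y : Euc n)⟫_ℝ := rfl
    have h2 : (⟪x, T y⟫_ℝ : ℝ) = ⟪(x : Euc n), (T y : Euc n)⟫_ℝ := rfl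
    have hc1 : (T x : Euc n) = T0 x := rfl
    have hc2 : (T y : Euc n) = T0 y := rfl
    rw [h1, h2, hc1, hc2, real_inner_eq_re, real_inner_eq_re, hAsym x y]
  -- any real orthonormal family in V spanning V gives a ℂ-orthonormal spanning family
  have key : ∀ (m : ℕ) (b : OrthonormalBasis (Fin m) ℝ V),
      Orthonormal ℂ (fun i => ((b i : Euc n))) ∧
      ⊤ ≤ Submodule.span ℂ (Set.range (fun i => ((b i : Euc n)))) := by
    intro m b
    constructor
    · rw [orthonormal_iff_ite]
      intro i j
      have hb := b.orthonormal
      rw [orthonormal_iff_ite] at hb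
      have hbij := hb i j
      have hfix : ∀ k : Fin m, C ((b k : Euc n)) = (b k : Euc n) := fun k => (b k).2
      rw [hreal _ _ (hfix i) (hfix j)]
      have : ⟪(b i : Euc n), (b j : Euc n)⟫_ℝ = ⟪b i, b j⟫_ℝ := rfl
      rw [this, hbij]
      split <;> norm_num
    · -- spanning
      intro x _
      set S : Submodule ℂ (Euc n) := Submodule.span ℂ (Set.range (fun i => ((b i : Euc n)))) with hS
      have hVsub : ∀ u : Euc n, C u = u → u ∈ S := by
        intro u hu
        have h1 : (⟨u, hu⟩ : V) ∈ (⊤ : Submodule ℝ V) := trivial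
        rw [← b.toBasis.span_eq] at h1
        have h2 : u ∈ Submodule.map V.subtype (Submodule.span ℝ (Set.range b.toBasis)) :=
          ⟨⟨u, hu⟩, h1, rfl⟩
        rw [Submodule.map_span] at h2
        have h3 : V.subtype '' Set.range ⇑b.toBasis = Set.range (fun i => ((b i : Euc n))) := by
          ext z
          simp
        rw [h3] at h2
        exact Submodule.span_subset_span ℝ ℂ _ h2
      -- decompose x = u + I • v with u, v fixed by C
      set u : Euc n := (2⁻¹ : ℂ) • (x + C x) with hu
      set v : Euc n := (-(Complex.I) / 2) • (x - C x) with hv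
      have hCneg : ∀ y : Euc n, C (-y) = -(C y) := by
        intro y
        have := hsmul (-1) y
        simpa using this
      have hCsub : ∀ y z : Euc n, C (y - z) = C y - C z := by
        intro y z
        rw [sub_eq_add_neg, hadd, hCneg, sub_eq_add_neg]
      have hcu : C u = u := by
        rw [hu, hsmul, hadd, hinv]
        have : (starRingEnd ℂ) (2⁻¹ : ℂ) = (2⁻¹ : ℂ) := by
          simp [Complex.ext_iff, Complex.conj_ofNat]
        rw [this, add_comm]
      have hcv : C v = v := by
        rw [hv, hsmul, hCsub, hinv]
        have h1 : (starRingEnd ℂ) (-(Complex.I) / 2) = Complex.I / 2 := by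
          simp [Complex.ext_iff, Complex.conj_ofNat]
        rw [h1]
        have : (Complex.I / 2) • (C x - x) = (-(Complex.I) / 2) • (x - C x) := by
          rw [← neg_sub x (C x), smul_neg, ← neg_smul]
          ring_nf
        rw [this]
      have hx : x = u + Complex.I • v := by
        rw [hu, hv, smul_smul]
        have : Complex.I * (-(Complex.I) / 2) = (2⁻¹ : ℂ) := by
          field_simp
          simp [Complex.I_sq]
        rw [this]
        module
      rw [hx]
      exact S.add_mem (hVsub u hcu) (S.smul_mem _ (hVsub v hcv))
  -- finrank ℝ V = n
  have hdim : Module.finrank ℝ V = n := by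
    set m := Module.finrank ℝ V with hm
    set b := stdOrthonormalBasis ℝ V
    obtain ⟨hon, hsp⟩ := key m b
    have hli : LinearIndependent ℂ (fun i => ((b i : Euc n))) := hon.linearIndependent
    have hspan : Submodule.span ℂ (Set.range (fun i => ((b i : Euc n)))) = ⊤ :=
      top_unique hsp
    let B : Module.Basis (Fin m) ℂ (Euc n) := Module.Basis.mk hli (le_of_eq hspan.symm)
    have := Module.finrank_eq_card_basis B
    simp [finrank_euclideanSpace] at this
    omega
  -- spectral theorem over ℝ
  set eb := hTsym.eigenvectorBasis hdim with heb
  obtain ⟨hon, hsp⟩ := key n eb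
  refine ⟨OrthonormalBasis.mk hon hsp, ?_, ?_⟩
  · intro i
    refine ⟨(hTsym.eigenvalues hdim i : ℂ), ?_⟩
    rw [OrthonormalBasis.coe_mk]
    have happ := hTsym.apply_eigenvectorBasis hdim i
    rw [← heb] at happ
    have h1 : T0 ((eb i : Euc n)) = ((T (eb i) : V) : Euc n) := rfl
    rw [h1, happ, Submodule.coe_smul]
    exact (algebraMap_smul ℂ _ _).symm
  · intro i
    rw [OrthonormalBasis.coe_mk]
    exact (eb i).2
end
end

section
/- Let T be an n×n complex matrix with Cartesian decomposition T = A + iB, where A = (T + T*)/2 and B = (T − T*)/(2i) are self-adjoint. Then T is unitarily equivalent to a complex symmetric matrix if and only if there exist orthonormal bases {e_i}_{i=1}^n and {f_i}_{i=1}^n of ℂⁿ consisting of eigenvectors of A and of B, respectively, such that ⟨e_i, f_j⟩ is a real number for all 1 ≤ i, j ≤ n. -/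
noncomputable section
open scoped InnerProductSpace
open Matrix

namespace UECSMAux

variable {n : ℕ}

lemma euc_inner (x y : Euc n) : ⟪x, y⟫_ℂ = ∑ k, (starRingEnd ℂ) (x k) * y k := by
  simp [PiLp.inner_apply, RCLike.inner_apply]
  exact Finset.sum_congr rfl (fun _ _ => mul_comm _ _)

lemma toEuc_apply (A : Matrix (Fin n) (Fin n) ℂ) (x : Euc n) (j : Fin n) :
    Matrix.toEuclideanLin A x j = ∑ k, A j k * x k := by
  have h : Matrix.toEuclideanLin A x j = (A *ᵥ ⇑x) j := by
    simp [Matrix.toEuclideanLin_apply]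
  rw [h]
  simp [Matrix.mulVec, dotProduct]

lemma exists_onb_of_unitary [Nonempty (Fin n)] (W : Matrix (Fin n) (Fin n) ℂ)
    (hW : W ∈ Matrix.unitaryGroup (Fin n) ℂ) :
    ∃ e : OrthonormalBasis (Fin n) ℂ (Euc n), ∀ i j, e i j = W j i := by
  have hW' : star W * W = 1 := Matrix.mem_unitaryGroup_iff'.mp hW
  set v : Fin n → Euc n := fun i => (WithLp.equiv 2 (Fin n → ℂ)).symm (fun j => W j i) with hv
  have hvapp : ∀ i j, v i j = W j i := fun i j => rfl
  have hvo : Orthonormal ℂ v := by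
    rw [orthonormal_iff_ite]
    intro i j
    have h1 : (star W * W) i j = (1 : Matrix (Fin n) (Fin n) ℂ) i j := by rw [hW']
    rw [Matrix.mul_apply, Matrix.one_apply] at h1
    rw [euc_inner]
    have h2 : ∑ k, (starRingEnd ℂ) (v i k) * v j k = ∑ k, (star W) i k * W k j := by
      apply Finset.sum_congr rfl
      intro k _
      rw [hvapp, hvapp, Matrix.star_apply]
      rfl
    rw [h2, h1]
  have hcard : Fintype.card (Fin n) = Module.finrank ℂ (Euc n) := by simp
  set b := basisOfOrthonormalOfCardEqFinrank hvo hcard with hb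
  have hbo : Orthonormal ℂ ⇑b := by
    rw [hb, coe_basisOfOrthonormalOfCardEqFinrank]; exact hvo
  refine ⟨b.toOrthonormalBasis hbo, fun i j => ?_⟩
  have h2 : ⇑(b.toOrthonormalBasis hbo) = ⇑b := Module.Basis.coe_toOrthonormalBasis b hbo
  have h3 : ⇑b = v := coe_basisOfOrthonormalOfCardEqFinrank hvo hcard
  rw [h2, h3]
  exact hvapp i j

lemma onb_unitary (e : OrthonormalBasis (Fin n) ℂ (Euc n)) :
    Matrix.of (fun j i => e i j) ∈ Matrix.unitaryGroup (Fin n) ℂ := by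
  rw [Matrix.mem_unitaryGroup_iff']
  ext i j
  have h1 := orthonormal_iff_ite.mp e.orthonormal i j
  rw [euc_inner] at h1
  rw [Matrix.mul_apply, Matrix.one_apply, ← h1]
  apply Finset.sum_congr rfl
  intro k _
  rw [Matrix.star_apply]
  rfl

lemma eig_of_mul_eq (A W : Matrix (Fin n) (Fin n) ℂ) (d : Fin n → ℂ)
    (h : A * W = W * Matrix.diagonal d) (e : OrthonormalBasis (Fin n) ℂ (Euc n))
    (he : ∀ i j, e i j = W j i) (i : Fin n) :
    Matrix.toEuclideanLin A (e i) = d i • e i := by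
  apply PiLp.ext
  intro j
  have h1 : (A * W) j i = (W * Matrix.diagonal d) j i := by rw [h]
  rw [Matrix.mul_apply, Matrix.mul_diagonal] at h1
  rw [toEuc_apply]
  simp only [PiLp.smul_apply, smul_eq_mul, he]
  rw [h1, mul_comm]

lemma mul_eq_of_eig (A : Matrix (Fin n) (Fin n) ℂ) (e : OrthonormalBasis (Fin n) ℂ (Euc n))
    (d : Fin n → ℂ) (h : ∀ i, Matrix.toEuclideanLin A (e i) = d i • e i) :
    A * Matrix.of (fun j i => e i j) = Matrix.of (fun j i => e i j) * Matrix.diagonal d := by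
  ext j i
  have h1 : Matrix.toEuclideanLin A (e i) j = (d i • e i) j := by rw [h i]
  rw [toEuc_apply] at h1
  simp only [PiLp.smul_apply, smul_eq_mul] at h1
  rw [Matrix.mul_apply, Matrix.mul_diagonal]
  show ∑ k, A j k * e i k = e i j * d i
  rw [h1, mul_comm]

lemma map_ofReal_mul (P Q : Matrix (Fin n) (Fin n) ℝ) :
    (P * Q).map Complex.ofReal = P.map Complex.ofReal * Q.map Complex.ofReal := by
  ext i j
  simp only [Matrix.mul_apply, Matrix.map_apply]
  push_cast
  rfl

lemma map_ofReal_star (R : Matrix (Fin n) (Fin n) ℝ) :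
    (star R).map Complex.ofReal = (R.map Complex.ofReal)ᴴ := by
  ext i j
  simp [Matrix.star_apply, Matrix.conjTranspose_apply, Complex.conj_ofReal]

lemma conjT_map_ofReal (R : Matrix (Fin n) (Fin n) ℝ) :
    (R.map Complex.ofReal)ᴴ = (R.map Complex.ofReal)ᵀ := by
  ext i j
  simp [Matrix.conjTranspose_apply, Complex.conj_ofReal]

lemma map_ofReal_unitary (P : Matrix (Fin n) (Fin n) ℝ)
    (hP : P ∈ Matrix.unitaryGroup (Fin n) ℝ) :
    P.map Complex.ofReal ∈ Matrix.unitaryGroup (Fin n) ℂ := by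
  rw [Matrix.mem_unitaryGroup_iff'] at hP ⊢
  have h1 : star (P.map Complex.ofReal) = (star P).map Complex.ofReal := by
    rw [map_ofReal_star, Matrix.star_eq_conjTranspose]
  rw [h1, ← map_ofReal_mul, hP]
  ext i j
  simp [Matrix.map_apply, Matrix.one_apply, apply_ite Complex.ofReal]

lemma diagonalize_real (C : Matrix (Fin n) (Fin n) ℂ) (C' : Matrix (Fin n) (Fin n) ℝ)
    (hmap : C'.map Complex.ofReal = C) (hsym : C'.IsHermitian) :
    ∃ (P : Matrix (Fin n) (Fin n) ℝ) (d : Fin n → ℝ), P ∈ Matrix.unitaryGroup (Fin n) ℝ ∧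
      C = (P.map Complex.ofReal) * Matrix.diagonal (fun i => (d i : ℂ)) *
        (P.map Complex.ofReal)ᴴ := by
  refine ⟨hsym.eigenvectorUnitary, RCLike.ofReal ∘ hsym.eigenvalues,
    (hsym.eigenvectorUnitary).2, ?_⟩
  conv_lhs => rw [← hmap, hsym.spectral_theorem]
  rw [Unitary.conjStarAlgAut_apply, map_ofReal_mul, map_ofReal_mul, map_ofReal_star, Matrix.diagonal_map (by simp)]

lemma eigencols (X U Pc : Matrix (Fin n) (Fin n) ℂ)
    (hU2 : U * Uᴴ = 1) (hPc1 : Pcᴴ * Pc = 1) (d : Fin n → ℂ)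
    (hdec : Uᴴ * X * U = Pc * Matrix.diagonal d * Pcᴴ) :
    X * (U * Pc) = (U * Pc) * Matrix.diagonal d := by
  have h1 : (Uᴴ * X * U) * Pc = Pc * Matrix.diagonal d := by
    rw [hdec, Matrix.mul_assoc, Matrix.mul_assoc, hPc1, Matrix.mul_one]
  have h2 : U * (Uᴴ * X * U) = X * U := by
    rw [← Matrix.mul_assoc, ← Matrix.mul_assoc, hU2, Matrix.one_mul]
  calc X * (U * Pc) = (X * U) * Pc := by rw [Matrix.mul_assoc]
    _ = (U * (Uᴴ * X * U)) * Pc := by rw [h2]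
    _ = U * ((Uᴴ * X * U) * Pc) := by rw [Matrix.mul_assoc]
    _ = U * (Pc * Matrix.diagonal d) := by rw [h1]
    _ = (U * Pc) * Matrix.diagonal d := by rw [Matrix.mul_assoc]

end UECSMAux

open UECSMAux in
/-- Let `T = A + iB` be the Cartesian decomposition, `A = (T + T*)/2` and
`B = (T - T*)/(2i)`.  Then `T` is UECSM iff there are orthonormal bases of eigenvectors
`{e_i}` of `A` and `{f_i}` of `B` with `⟨e_i, f_j⟩` real for all `i, j`. -/
theorem uecsm_iff_real_angles {n : ℕ} (T A B : Matrix (Fin n) (Fin n) ℂ)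
    (hA : A = (2⁻¹ : ℂ) • (T + Tᴴ)) (hB : B = (2 * Complex.I)⁻¹ • (T - Tᴴ)) :
    UECSM T ↔ ∃ (e f : OrthonormalBasis (Fin n) ℂ (Euc n)),
      (∀ i, ∃ μ : ℂ, Matrix.toEuclideanLin A (e i) = μ • e i) ∧
      (∀ i, ∃ ν : ℂ, Matrix.toEuclideanLin B (f i) = ν • f i) ∧
      (∀ i j, ∃ r : ℝ, ⟪e i, f j⟫_ℂ = (r : ℂ)) := by
  constructor
  · -- forward
    rintro ⟨U, hU, hS⟩
    rcases Nat.eq_zero_or_pos n with hn | hn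
    · subst hn
      exact ⟨EuclideanSpace.basisFun (Fin 0) ℂ, EuclideanSpace.basisFun (Fin 0) ℂ,
        fun i => i.elim0, fun i => i.elim0, fun i => i.elim0⟩
    haveI : Nonempty (Fin n) := ⟨⟨0, hn⟩⟩
    set S := Uᴴ * T * U with hSdef
    have hU1 : Uᴴ * U = 1 := by
      rw [← Matrix.star_eq_conjTranspose]; exact Matrix.mem_unitaryGroup_iff'.mp hU
    have hU2 : U * Uᴴ = 1 := by
      rw [← Matrix.star_eq_conjTranspose]; exact Matrix.mem_unitaryGroup_iff.mp hU
    have hSH : Sᴴ = Uᴴ * Tᴴ * U := by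
      simp [hSdef, Matrix.conjTranspose_mul, Matrix.mul_assoc]
    have hSsymm : ∀ i j, S j i = S i j := fun i j => congrFun (congrFun hS i) j
    have hMid : Uᴴ * A * U = (2⁻¹ : ℂ) • (S + Sᴴ) := by
      rw [hA, hSH, hSdef]
      rw [Matrix.mul_smul, Matrix.smul_mul, Matrix.mul_add, Matrix.add_mul, smul_add]
    have hNid : Uᴴ * B * U = (2 * Complex.I)⁻¹ • (S - Sᴴ) := by
      rw [hB, hSH, hSdef]
      rw [Matrix.mul_smul, Matrix.smul_mul, Matrix.mul_sub, Matrix.sub_mul, smul_sub]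
    have hSHapp : ∀ i j, Sᴴ i j = (starRingEnd ℂ) (S i j) := by
      intro i j
      rw [Matrix.conjTranspose_apply, hSsymm j i]
      rfl
    -- real matrices
    set M' : Matrix (Fin n) (Fin n) ℝ := Matrix.of (fun i j => (S i j).re) with hM'def
    set N' : Matrix (Fin n) (Fin n) ℝ := Matrix.of (fun i j => (S i j).im) with hN'def
    have hM'map : M'.map Complex.ofReal = Uᴴ * A * U := by
      rw [hMid]
      ext i j
      simp only [Matrix.map_apply, Matrix.smul_apply, Matrix.add_apply, hSHapp, hM'def,
        Matrix.of_apply, smul_eq_mul]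
      rw [Complex.add_conj]
      push_cast
      ring
    have hN'map : N'.map Complex.ofReal = Uᴴ * B * U := by
      rw [hNid]
      ext i j
      simp only [Matrix.map_apply, Matrix.smul_apply, Matrix.sub_apply, hSHapp, hN'def,
        Matrix.of_apply, smul_eq_mul]
      rw [Complex.sub_conj]
      have h2I : (2 : ℂ) * Complex.I ≠ 0 := by
        simp [Complex.I_ne_zero]
      field_simp
      push_cast
      ring
    have hM'h : M'.IsHermitian := by
      show M'ᴴ = M'
      ext i j
      simp only [Matrix.conjTranspose_apply, hM'def, Matrix.of_apply, star_trivial]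
      exact congrArg Complex.re (hSsymm i j)
    have hN'h : N'.IsHermitian := by
      show N'ᴴ = N'
      ext i j
      simp only [Matrix.conjTranspose_apply, hN'def, Matrix.of_apply, star_trivial]
      exact congrArg Complex.im (hSsymm i j)
    obtain ⟨P, dA, hPmem, hPdec⟩ := diagonalize_real _ M' hM'map hM'h
    obtain ⟨Q, dB, hQmem, hQdec⟩ := diagonalize_real _ N' hN'map hN'h
    set Pc := P.map Complex.ofReal with hPcdef
    set Qc := Q.map Complex.ofReal with hQcdef
    have hPcmem : Pc ∈ Matrix.unitaryGroup (Fin n) ℂ := map_ofReal_unitary P hPmem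
    have hQcmem : Qc ∈ Matrix.unitaryGroup (Fin n) ℂ := map_ofReal_unitary Q hQmem
    have hPc1 : Pcᴴ * Pc = 1 := by
      rw [← Matrix.star_eq_conjTranspose]; exact Matrix.mem_unitaryGroup_iff'.mp hPcmem
    have hQc1 : Qcᴴ * Qc = 1 := by
      rw [← Matrix.star_eq_conjTranspose]; exact Matrix.mem_unitaryGroup_iff'.mp hQcmem
    have hW1mem : U * Pc ∈ Matrix.unitaryGroup (Fin n) ℂ := mul_mem hU hPcmem
    have hW2mem : U * Qc ∈ Matrix.unitaryGroup (Fin n) ℂ := mul_mem hU hQcmem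
    obtain ⟨e, he⟩ := exists_onb_of_unitary (U * Pc) hW1mem
    obtain ⟨f, hf⟩ := exists_onb_of_unitary (U * Qc) hW2mem
    have hAeig := eigencols A U Pc hU2 hPc1 _ hPdec
    have hBeig := eigencols B U Qc hU2 hQc1 _ hQdec
    refine ⟨e, f, fun i => ⟨_, eig_of_mul_eq A (U * Pc) _ hAeig e he i⟩,
      fun i => ⟨_, eig_of_mul_eq B (U * Qc) _ hBeig f hf i⟩, fun i j => ?_⟩
    -- real inner products
    have hWW : (U * Pc)ᴴ * (U * Qc) = (star P * Q).map Complex.ofReal := by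
      rw [Matrix.conjTranspose_mul, Matrix.mul_assoc, ← Matrix.mul_assoc Uᴴ U Qc, hU1,
        Matrix.one_mul, map_ofReal_mul, map_ofReal_star]
    refine ⟨((star P * Q) i j), ?_⟩
    have hent : ((U * Pc)ᴴ * (U * Qc)) i j = (((star P * Q) i j : ℝ) : ℂ) := by
      rw [hWW]; rfl
    rw [euc_inner]
    rw [← hent, Matrix.mul_apply]
    apply Finset.sum_congr rfl
    intro k _
    rw [Matrix.conjTranspose_apply, he, hf]
    rfl
  · -- backward
    rintro ⟨e, f, he, hf, hef⟩
    choose μ hμ using he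
    choose ν hν using hf
    choose r hr using hef
    set U : Matrix (Fin n) (Fin n) ℂ := Matrix.of (fun j i => e i j) with hUdef
    set V : Matrix (Fin n) (Fin n) ℂ := Matrix.of (fun j i => f i j) with hVdef
    have hUmem : U ∈ Matrix.unitaryGroup (Fin n) ℂ := onb_unitary e
    have hVmem : V ∈ Matrix.unitaryGroup (Fin n) ℂ := onb_unitary f
    have hU1 : Uᴴ * U = 1 := by
      rw [← Matrix.star_eq_conjTranspose]; exact Matrix.mem_unitaryGroup_iff'.mp hUmem
    have hV2 : V * Vᴴ = 1 := by
      rw [← Matrix.star_eq_conjTranspose]; exact Matrix.mem_unitaryGroup_iff.mp hVmem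
    have hAU : A * U = U * Matrix.diagonal μ := mul_eq_of_eig A e μ hμ
    have hBV : B * V = V * Matrix.diagonal ν := mul_eq_of_eig B f ν hν
    have hUAU : Uᴴ * A * U = Matrix.diagonal μ := by
      rw [Matrix.mul_assoc, hAU, ← Matrix.mul_assoc, hU1, Matrix.one_mul]
    have hBexp : B = V * Matrix.diagonal ν * Vᴴ := by
      calc B = B * (V * Vᴴ) := by rw [hV2, Matrix.mul_one]
        _ = (B * V) * Vᴴ := by rw [Matrix.mul_assoc]
        _ = V * Matrix.diagonal ν * Vᴴ := by rw [hBV]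
    set R : Matrix (Fin n) (Fin n) ℝ := Matrix.of (fun i j => r i j) with hRdef
    have hWR : Uᴴ * V = R.map Complex.ofReal := by
      ext i j
      rw [Matrix.mul_apply]
      have h1 := hr i j
      rw [euc_inner] at h1
      have h2 : ∑ k, Uᴴ i k * V k j = ∑ k, (starRingEnd ℂ) (e i k) * f j k := by
        apply Finset.sum_congr rfl
        intro k _
        rw [Matrix.conjTranspose_apply]
        rfl
      rw [h2, h1]
      rfl
    have hUBU : Uᴴ * B * U = (Uᴴ * V) * Matrix.diagonal ν * (Uᴴ * V)ᴴ := by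
      rw [hBexp]
      rw [Matrix.conjTranspose_mul, Matrix.conjTranspose_conjTranspose]
      rw [Matrix.mul_assoc, Matrix.mul_assoc, Matrix.mul_assoc, Matrix.mul_assoc,
        Matrix.mul_assoc]
    have hT : T = A + Complex.I • B := by
      rw [hA, hB, smul_smul]
      have h2 : Complex.I * (2 * Complex.I)⁻¹ = (2 : ℂ)⁻¹ := by
        field_simp
      rw [h2, ← smul_add]
      have h3 : (T + Tᴴ) + (T - Tᴴ) = (2 : ℂ) • T := by
        rw [two_smul]; abel
      rw [h3, smul_smul, inv_mul_cancel₀ (two_ne_zero), one_smul]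
    refine ⟨U, hUmem, ?_⟩
    have hUTU : Uᴴ * T * U = Matrix.diagonal μ +
        Complex.I • ((Uᴴ * V) * Matrix.diagonal ν * (Uᴴ * V)ᴴ) := by
      have hdist : Uᴴ * (A + Complex.I • B) * U = Uᴴ * A * U + Complex.I • (Uᴴ * B * U) := by
        rw [Matrix.mul_add, Matrix.add_mul, Matrix.mul_smul, Matrix.smul_mul]
      rw [hT, hdist, hUAU, hUBU]
    rw [hUTU, Matrix.transpose_add, Matrix.transpose_smul, Matrix.diagonal_transpose]
    congr 1
    rw [hWR, conjT_map_ofReal]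
    rw [Matrix.transpose_mul, Matrix.transpose_mul, Matrix.transpose_transpose,
      Matrix.diagonal_transpose, Matrix.mul_assoc]
end
end

section
/- Every normal n×n complex matrix (a matrix T with T T* = T* T) is unitarily equivalent to a complex symmetric matrix. -/
noncomputable section
open Matrix

open Module.End in
/-- A commuting pair of symmetric operators has a joint orthonormal eigenbasis. -/
theorem exists_joint_eigenbasis {𝕜 E : Type*} [RCLike 𝕜] [NormedAddCommGroup E]
    [InnerProductSpace 𝕜 E] [FiniteDimensional 𝕜 E] {n : ℕ}
    (hn : Module.finrank 𝕜 E = n) {A B : E →ₗ[𝕜] E}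
    (hA : A.IsSymmetric) (hB : B.IsSymmetric) (hAB : Commute A B) :
    ∃ (b : OrthonormalBasis (Fin n) 𝕜 E) (μ : Fin n → 𝕜 × 𝕜),
      ∀ i, A (b i) = (μ i).2 • b i ∧ B (b i) = (μ i).1 • b i := by
  classical
  have hint : DirectSum.IsInternal
      (fun i : 𝕜 × 𝕜 => eigenspace A i.2 ⊓ eigenspace B i.1) :=
    hA.directSum_isInternal_of_commute hB hAB
  have hfam := hA.orthogonalFamily_eigenspace_inf_eigenspace hB
  obtain ⟨hindep, hsup⟩ :=
    (DirectSum.isInternal_submodule_iff_iSupIndep_and_iSup_eq_top _).mp hint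
  have hfin : {i : 𝕜 × 𝕜 | eigenspace A i.2 ⊓ eigenspace B i.1 ≠ ⊥}.Finite :=
    WellFoundedGT.finite_ne_bot_of_iSupIndep hindep
  haveI : Fintype {i : 𝕜 × 𝕜 // eigenspace A i.2 ⊓ eigenspace B i.1 ≠ ⊥} := hfin.fintype
  have hint' : DirectSum.IsInternal
      (fun i : {i : 𝕜 × 𝕜 // eigenspace A i.2 ⊓ eigenspace B i.1 ≠ ⊥} =>
        eigenspace A i.1.2 ⊓ eigenspace B i.1.1) := by
    rw [DirectSum.isInternal_submodule_iff_iSupIndep_and_iSup_eq_top]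
    refine ⟨hindep.comp Subtype.coe_injective, ?_⟩
    rw [iSup_ne_bot_subtype (fun i : 𝕜 × 𝕜 => eigenspace A i.2 ⊓ eigenspace B i.1), hsup]
  have hfam' : OrthogonalFamily 𝕜
      (fun i : {i : 𝕜 × 𝕜 // eigenspace A i.2 ⊓ eigenspace B i.1 ≠ ⊥} =>
        ↥(eigenspace A i.1.2 ⊓ eigenspace B i.1.1))
      (fun i => (eigenspace A i.1.2 ⊓ eigenspace B i.1.1).subtypeₗᵢ) :=
    fun i j hij => hfam (Subtype.coe_injective.ne hij)
  refine ⟨hint'.subordinateOrthonormalBasis hn hfam',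
    fun i => (hint'.subordinateOrthonormalBasisIndex hn i hfam').val, fun i => ?_⟩
  have h := hint'.subordinateOrthonormalBasis_subordinate hn i hfam'
  exact ⟨mem_eigenspace_iff.mp h.1, mem_eigenspace_iff.mp h.2⟩

theorem toEuclideanLin_mul {n : ℕ} (M N : Matrix (Fin n) (Fin n) ℂ) :
    Matrix.toEuclideanLin (M * N) =
      (Matrix.toEuclideanLin M) * (Matrix.toEuclideanLin N) := by
  ext x
  simp [Matrix.toEuclideanLin_apply, Matrix.mulVec_mulVec, Module.End.mul_apply]

open Module.End LinearMap in
/-- Every normal matrix is unitarily equivalent to a complex symmetric matrix. -/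
theorem uecsm_of_normal {n : ℕ} (T : Matrix (Fin n) (Fin n) ℂ)
    (hT : T * Tᴴ = Tᴴ * T) : UECSM T := by
  classical
  set L : EuclideanSpace ℂ (Fin n) →ₗ[ℂ] EuclideanSpace ℂ (Fin n) :=
    Matrix.toEuclideanLin T with hLdef
  have hLstar : Matrix.toEuclideanLin Tᴴ = LinearMap.adjoint L :=
    Matrix.toEuclideanLin_conjTranspose_eq_adjoint T
  have hnormal : L * LinearMap.adjoint L = LinearMap.adjoint L * L := by
    rw [← hLstar, hLdef, ← toEuclideanLin_mul, ← toEuclideanLin_mul, hT]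
  set A : EuclideanSpace ℂ (Fin n) →ₗ[ℂ] EuclideanSpace ℂ (Fin n) :=
    (1/2 : ℂ) • (L + LinearMap.adjoint L) with hAdef
  set B : EuclideanSpace ℂ (Fin n) →ₗ[ℂ] EuclideanSpace ℂ (Fin n) :=
    (-(Complex.I)/2 : ℂ) • (L - LinearMap.adjoint L) with hBdef
  have hA : A.IsSymmetric := by
    intro x y
    simp only [hAdef, LinearMap.smul_apply, LinearMap.add_apply, inner_smul_left,
      inner_smul_right, inner_add_left, inner_add_right, LinearMap.adjoint_inner_left,
      LinearMap.adjoint_inner_right]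
    have : (starRingEnd ℂ) (1/2 : ℂ) = 1/2 := by
      simp [map_div₀, map_ofNat]
    rw [this]; ring
  have hB : B.IsSymmetric := by
    intro x y
    simp only [hBdef, LinearMap.smul_apply, LinearMap.sub_apply, inner_smul_left,
      inner_smul_right, inner_sub_left, inner_sub_right, LinearMap.adjoint_inner_left,
      LinearMap.adjoint_inner_right]
    have : (starRingEnd ℂ) (-(Complex.I)/2 : ℂ) = Complex.I/2 := by
      simp [map_div₀, map_ofNat, Complex.conj_I]
    rw [this]; ring
  have hPQ : (L + LinearMap.adjoint L) * (L - LinearMap.adjoint L)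
      = (L - LinearMap.adjoint L) * (L + LinearMap.adjoint L) := by
    simp only [add_mul, sub_mul, mul_add, mul_sub, hnormal]
    abel
  have hAB : Commute A B := by
    rw [Commute, SemiconjBy, hAdef, hBdef, smul_mul_smul_comm, smul_mul_smul_comm, hPQ,
      mul_comm (1/2 : ℂ)]
  have hn : Module.finrank ℂ (EuclideanSpace ℂ (Fin n)) = n := by
    simp [finrank_euclideanSpace]
  obtain ⟨b, μ, hbμ⟩ := exists_joint_eigenbasis hn hA hB hAB
  set d : Fin n → ℂ := fun i => (μ i).2 + Complex.I * (μ i).1 with hddef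
  have hLAB : A + Complex.I • B = L := by
    rw [hAdef, hBdef, smul_smul]
    have hI : Complex.I * (-(Complex.I)/2) = 1/2 := by
      simp [Complex.ext_iff]
      norm_num
    rw [hI]
    module
  have hLb : ∀ i, L (b i) = d i • b i := by
    intro i
    rw [← hLAB]
    simp only [LinearMap.add_apply, LinearMap.smul_apply, (hbμ i).1, (hbμ i).2, hddef,
      smul_smul, add_smul]
  -- translate to matrix land
  have hmv : ∀ j, T *ᵥ ⇑(b j) = d j • ⇑(b j) := by
    intro j
    simpa only [hLdef, Matrix.toEuclideanLin_apply, WithLp.ofLp_smul] using congr(⇑$(hLb j))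
  set U : Matrix (Fin n) (Fin n) ℂ :=
    (EuclideanSpace.basisFun (Fin n) ℂ).toBasis.toMatrix b.toBasis with hUdef
  have hUmem : U ∈ Matrix.unitaryGroup (Fin n) ℂ :=
    (EuclideanSpace.basisFun (Fin n) ℂ).toMatrix_orthonormalBasis_mem_unitary b
  have hUapply : ∀ i j, U i j = b j i := fun i j => rfl
  have hUmulVec : ∀ j, U *ᵥ Pi.single j 1 = ⇑(b j) := by
    intro j
    ext i
    simp [Matrix.mulVec_single, hUapply]
  have hstarU : ∀ j, (star U) *ᵥ ⇑(b j) = Pi.single j 1 := by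
    intro j
    rw [← hUmulVec, Matrix.mulVec_mulVec]
    have : star U * U = 1 := (Matrix.mem_unitaryGroup_iff'.mp hUmem)
    rw [this, Matrix.one_mulVec]
  have key : Uᴴ * T * U = Matrix.diagonal d := by
    rw [← Matrix.star_eq_conjTranspose]
    apply Matrix.toEuclideanLin.injective
    apply Module.Basis.ext (EuclideanSpace.basisFun (Fin n) ℂ).toBasis
    intro i
    simp only [Matrix.toEuclideanLin_apply, OrthonormalBasis.coe_toBasis,
      EuclideanSpace.basisFun_apply, EuclideanSpace.ofLp_single, ← Matrix.mulVec_mulVec,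
      hUmulVec, hmv, Matrix.diagonal_mulVec_single, Matrix.mulVec_smul, hstarU,
      WithLp.toLp_smul, EuclideanSpace.toLp_single, mul_one]
    apply PiLp.ext
    intro j
    simp only [PiLp.smul_apply, EuclideanSpace.single_apply, smul_eq_mul, mul_ite, mul_one,
      mul_zero]
  exact ⟨U, hUmem, by rw [key, Matrix.diagonal_transpose]⟩
end
end

section
/- Let T = A + iB be an n×n complex matrix (A = (T+T*)/2, B = (T−T*)/(2i) self-adjoint) that is unitarily equivalent to a complex symmetric matrix, and let {e_i} and {f_i} be orthonormal bases of eigenvectors of A and B respectively with ⟨e_i, f_j⟩ ∈ ℝ for all i, j. Then for any self-adjoint n×n matrices A′ and B′ such that each e_i is an eigenvector of A′ and each f_i is an eigenvector of B′, the matrix T′ = A′ + iB′ is unitarily equivalent to a complex symmetric matrix. -/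
noncomputable section
open scoped InnerProductSpace
open Matrix

lemma entry_eq_inner {n : ℕ} (e : OrthonormalBasis (Fin n) ℂ (Euc n))
    (M : Matrix (Fin n) (Fin n) ℂ) (i j : Fin n) :
    ((Matrix.of fun i j => e j i)ᴴ * M * (Matrix.of fun i j => e j i)) i j
      = ⟪e i, Matrix.toEuclideanLin M (e j)⟫_ℂ := by
  simp only [Matrix.mul_apply, Matrix.toEuclideanLin_apply, Matrix.mulVec, dotProduct,
    PiLp.inner_apply, Matrix.conjTranspose_apply, Matrix.of_apply, RCLike.inner_apply,
    PiLp.toLp_apply, Finset.mul_sum, Finset.sum_mul]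
  rw [Finset.sum_comm]
  refine Finset.sum_congr rfl fun x _ => Finset.sum_congr rfl fun y _ => by
    simp only [Complex.star_def]
    ring

lemma basis_matrix_unitary {n : ℕ} (e : OrthonormalBasis (Fin n) ℂ (Euc n)) :
    (Matrix.of fun i j => e j i) ∈ Matrix.unitaryGroup (Fin n) ℂ := by
  rw [Matrix.mem_unitaryGroup_iff']
  ext i j
  have h := orthonormal_iff_ite.mp e.orthonormal i j
  simp only [PiLp.inner_apply, RCLike.inner_apply] at h
  simpa [Matrix.mul_apply, Matrix.conjTranspose_apply, Matrix.one_apply, mul_comm] using h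

/-- If `T = A + iB` is UECSM with witnessing orthonormal bases of eigenvectors `{e_i}`
of `A` and `{f_i}` of `B` having real mutual inner products, then for any self-adjoint
`A'`, `B'` having the `e_i` (resp. the `f_i`) as eigenvectors, `T' = A' + iB'` is
also UECSM. -/
theorem uecsm_of_shared_eigenbases {n : ℕ} (T A B A' B' : Matrix (Fin n) (Fin n) ℂ)
    (hA : A = (2⁻¹ : ℂ) • (T + Tᴴ)) (hB : B = (2 * Complex.I)⁻¹ • (T - Tᴴ))
    (hT : UECSM T)
    (e f : OrthonormalBasis (Fin n) ℂ (Euc n))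
    (he : ∀ i, ∃ μ : ℂ, Matrix.toEuclideanLin A (e i) = μ • e i)
    (hf : ∀ i, ∃ ν : ℂ, Matrix.toEuclideanLin B (f i) = ν • f i)
    (hreal : ∀ i j, ∃ r : ℝ, ⟪e i, f j⟫_ℂ = (r : ℂ))
    (hA' : A'.IsHermitian) (hB' : B'.IsHermitian)
    (he' : ∀ i, ∃ μ : ℂ, Matrix.toEuclideanLin A' (e i) = μ • e i)
    (hf' : ∀ i, ∃ ν : ℂ, Matrix.toEuclideanLin B' (f i) = ν • f i) :
    UECSM (A' + Complex.I • B') := by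
  classical
  set U : Matrix (Fin n) (Fin n) ℂ := Matrix.of fun i j => e j i with hUdef
  refine ⟨U, basis_matrix_unitary e, ?_⟩
  have hsymB := (Matrix.isHermitian_iff_isSymmetric.mp hB')
  set LB := Matrix.toEuclideanLin B' with hLB
  set LA := Matrix.toEuclideanLin A' with hLA
  -- eigenvalues of B' on f
  set ν : Fin n → ℂ := fun m => (hf' m).choose with hν
  have hνspec : ∀ m, LB (f m) = ν m • f m := fun m => (hf' m).choose_spec
  have hee : ∀ i j, ⟪e i, e j⟫_ℂ = if i = j then 1 else 0 :=
    fun i j => orthonormal_iff_ite.mp e.orthonormal i j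
  have hff : ∀ i j, ⟪f i, f j⟫_ℂ = if i = j then 1 else 0 :=
    fun i j => orthonormal_iff_ite.mp f.orthonormal i j
  have hνval : ∀ m, ⟪f m, LB (f m)⟫_ℂ = ν m := by
    intro m
    rw [hνspec m, inner_smul_right, hff m m]
    simp
  have hνreal : ∀ m, (starRingEnd ℂ) (ν m) = ν m := by
    intro m
    rw [← hνval m, inner_conj_symm, hsymB (f m) (f m), hνval m]
  have hfe : ∀ m a, ⟪f m, e a⟫_ℂ = ⟪e a, f m⟫_ℂ := by
    intro m a
    obtain ⟨r, hr⟩ := hreal a m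
    rw [← inner_conj_symm, hr]
    simp
  -- key expansion for B'
  have key : ∀ a b, ⟪e a, LB (e b)⟫_ℂ = ∑ m, ν m * (⟪e a, f m⟫_ℂ * ⟪e b, f m⟫_ℂ) := by
    intro a b
    rw [← OrthonormalBasis.sum_inner_mul_inner f (e a) (LB (e b))]
    refine Finset.sum_congr rfl fun m _ => ?_
    rw [← hsymB (f m) (e b), hνspec m, inner_smul_left, hνreal m, hfe m b]
    ring
  have hBsym : ∀ a b, ⟪e a, LB (e b)⟫_ℂ = ⟪e b, LB (e a)⟫_ℂ := by
    intro a b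
    rw [key a b, key b a]
    exact Finset.sum_congr rfl fun m _ => by ring
  have hAsym : ∀ a b, ⟪e a, LA (e b)⟫_ℂ = ⟪e b, LA (e a)⟫_ℂ := by
    intro a b
    rcases eq_or_ne a b with h | h
    · subst h; rfl
    · obtain ⟨μa, ha⟩ := he' a
      obtain ⟨μb, hb⟩ := he' b
      rw [hLA, ha, hb, inner_smul_right, inner_smul_right, hee a b, hee b a]
      simp [h, h.symm]
  ext i j
  rw [Matrix.transpose_apply, hUdef, entry_eq_inner, entry_eq_inner]
  have expand : ∀ a b, ⟪e a, Matrix.toEuclideanLin (A' + Complex.I • B') (e b)⟫_ℂ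
      = ⟪e a, LA (e b)⟫_ℂ + Complex.I * ⟪e a, LB (e b)⟫_ℂ := by
    intro a b
    rw [map_add, _root_.map_smul]
    simp [inner_add_right, inner_smul_right]
    rfl
  rw [expand, expand, hAsym j i, hBsym j i]
end
end

section
/- Let T = A + iB be an n×n complex matrix (A = (T+T*)/2, B = (T−T*)/(2i) self-adjoint), and let {g_i}_{i=1}^n and {h_i}_{i=1}^n be a proper pair of orthogonal bases of ℂⁿ consisting of eigenvectors of A and of B, respectively. If for all 2 ≤ i, j ≤ n the quotient ⟨g_i, h_j⟩ / (⟨g_i, h_1⟩ ⟨g_1, h_j⟩) is a real number, then T is unitarily equivalent to a complex symmetric matrix. -/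
noncomputable section
open scoped InnerProductSpace
open Matrix

/-- A pair of families `g, h` is proper if `⟨g 0, h 0⟩` is real and no inner product
`⟨g i, h j⟩` with `i = 0` or `j = 0` vanishes. -/
def ProperPair {n : ℕ} [NeZero n] (g h : Fin n → Euc n) : Prop :=
  (∃ r : ℝ, ⟪g 0, h 0⟫_ℂ = (r : ℂ)) ∧
  ∀ i j, ⟪g i, h j⟫_ℂ = 0 → i ≠ 0 ∧ j ≠ 0

private lemma cartesian_aux (z w : ℂ) :
    z = 2⁻¹*(z+w) + Complex.I*((2*Complex.I)⁻¹*(z-w)) := by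
  field_simp; ring

private lemma aux_k0 (Mv : ℂ) (a c r : ℝ) (hM : Mv ≠ 0) (ha : (a:ℂ) ≠ 0) (hc : (c:ℂ) ≠ 0)
    (hr : (r:ℂ) ≠ 0) :
    ((a:ℂ)^2 / Mv) / (a * c) * Mv = ((a / (c * r) : ℝ) : ℂ) * r := by
  push_cast; field_simp

private lemma aux_gen (Mv K : ℂ) (a c r : ℝ) (hM : Mv ≠ 0) (ha : (a:ℂ) ≠ 0) (hc : (c:ℂ) ≠ 0) :
    ((a:ℂ)^2 / Mv) / (a * c) * ((r:ℂ) * (Mv * K)) = ((r * a / c : ℝ) : ℂ) * K := by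
  push_cast; field_simp

private lemma conj_mul_self_aux (z : ℂ) :
    (starRingEnd ℂ) z * z = (‖z‖ : ℂ)^2 := by
  rw [← Complex.normSq_eq_conj_mul_self, ← Complex.sq_norm]; push_cast; ring

/-- If `T = A + iB` and `{g_i}, {h_i}` are a proper pair of orthogonal bases of
eigenvectors of `A` and `B` respectively, such that
`⟨g_i, h_j⟩ / (⟨g_i, h_1⟩⟨g_1, h_j⟩)` is real for all `i, j ≥ 2`, then `T` is UECSM. -/
theorem uecsm_of_real_ratio {n : ℕ} [NeZero n] (T A B : Matrix (Fin n) (Fin n) ℂ)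
    (hA : A = (2⁻¹ : ℂ) • (T + Tᴴ)) (hB : B = (2 * Complex.I)⁻¹ • (T - Tᴴ))
    (g h : Module.Basis (Fin n) ℂ (Euc n))
    (hgo : ∀ i j, i ≠ j → ⟪g i, g j⟫_ℂ = 0)
    (hho : ∀ i j, i ≠ j → ⟪h i, h j⟫_ℂ = 0)
    (hge : ∀ i, ∃ μ : ℂ, Matrix.toEuclideanLin A (g i) = μ • g i)
    (hhe : ∀ i, ∃ ν : ℂ, Matrix.toEuclideanLin B (h i) = ν • h i)
    (hp : ProperPair (fun i => g i) (fun i => h i))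
    (hratio : ∀ i j : Fin n, i ≠ 0 → j ≠ 0 →
      ∃ r : ℝ, ⟪g i, h j⟫_ℂ / (⟪g i, h 0⟫_ℂ * ⟪g 0, h j⟫_ℂ) = (r : ℂ)) :
    UECSM T := by
  classical
  have hT : T = A + Complex.I • B := by
    subst hA hB
    ext i j
    simp only [Matrix.add_apply, Matrix.smul_apply, smul_eq_mul]
    exact cartesian_aux (T i j) (Tᴴ i j)
  have hMne : ∀ i j : Fin n, (i = 0 ∨ j = 0) → ⟪(g i : Euc n), h j⟫_ℂ ≠ 0 := by
    intro i j hij hz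
    rcases hp.2 i j hz with ⟨hi, hj⟩
    rcases hij with h0 | h0
    · exact hi h0
    · exact hj h0
  obtain ⟨r₀, hr₀⟩ := hp.1
  have hr₀' : ⟪(g 0 : Euc n), h 0⟫_ℂ = (r₀ : ℂ) := hr₀
  have hr₀ne : (r₀ : ℂ) ≠ 0 := hr₀' ▸ hMne 0 0 (Or.inl rfl)
  have hgn : ∀ i, ‖(g i : Euc n)‖ ≠ 0 := fun i => norm_ne_zero_iff.2 (g.ne_zero i)
  set γ : Fin n → ℂ := fun i =>
    ⟪(g i : Euc n), h 0⟫_ℂ / (‖⟪(g i : Euc n), h 0⟫_ℂ‖ * ‖(g i : Euc n)‖) with hγ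
  set e : Fin n → Euc n := fun i => γ i • (g i : Euc n) with he
  have habsγ : ∀ i, ‖γ i‖ = ‖(g i : Euc n)‖⁻¹ := by
    intro i
    have hM := hMne i 0 (Or.inr rfl)
    rw [hγ]
    simp only []
    rw [norm_div, norm_mul, Complex.norm_real, Complex.norm_real, norm_norm, norm_norm,
      div_mul_eq_div_div, div_self (by simpa using hM), one_div]
  -- orthonormality of e
  have heo : ∀ i j, ⟪e i, e j⟫_ℂ = if i = j then 1 else 0 := by
    intro i j
    by_cases hij : i = j
    · subst hij
      have hnorm : ‖e i‖ = 1 := by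
        rw [he]
        simp only []
        rw [norm_smul, habsγ, inv_mul_cancel₀ (hgn i)]
      rw [if_pos rfl, inner_self_eq_norm_sq_to_K, hnorm]
      norm_num
    · rw [if_neg hij, he]
      simp only [inner_smul_left, inner_smul_right, hgo i j hij, mul_zero]
  -- inner product as a sum
  have key : ∀ (v : Euc n) (i : Fin n), ⟪e i, v⟫_ℂ = ∑ x, (starRingEnd ℂ) (e i x) * v x := by
    intro v i
    rw [PiLp.inner_apply]
    simp [RCLike.inner_apply, mul_comm]
  have hlin : ∀ (C : Matrix (Fin n) (Fin n) ℂ) (v : Euc n) (x : Fin n),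
      Matrix.toEuclideanLin C v x = ∑ y, C x y * v y := by
    intro C v x
    rw [Matrix.toEuclideanLin_apply]
    rfl
  -- the unitary matrix
  set U : Matrix (Fin n) (Fin n) ℂ := Matrix.of (fun x i => e i x) with hU
  have hUstar : star U * U = 1 := by
    ext i j
    have : (star U * U) i j = ⟪e i, e j⟫_ℂ := by
      rw [key]
      simp only [Matrix.mul_apply, Matrix.star_apply, hU, Matrix.of_apply, Complex.star_def]
    rw [this, heo, Matrix.one_apply]
  have hbridge : ∀ i j, (Uᴴ * T * U) i j = ⟪e i, Matrix.toEuclideanLin T (e j)⟫_ℂ := by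
    intro i j
    rw [key]
    simp only [Matrix.mul_apply, Matrix.conjTranspose_apply, hU, Matrix.of_apply,
      Complex.star_def, hlin, Finset.sum_mul, Finset.mul_sum]
    rw [Finset.sum_comm]
    exact Finset.sum_congr rfl fun x _ => Finset.sum_congr rfl fun y _ => by ring
  -- A part is symmetric
  have hApart : ∀ i j, ⟪e i, Matrix.toEuclideanLin A (e j)⟫_ℂ
      = ⟪e j, Matrix.toEuclideanLin A (e i)⟫_ℂ := by
    intro i j
    by_cases hij : i = j
    · subst hij; rfl
    · obtain ⟨μi, hμi⟩ := hge i
      obtain ⟨μj, hμj⟩ := hge j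
      rw [he]
      simp only [_root_.map_smul, hμi, hμj, smul_smul, inner_smul_left, inner_smul_right]
      rw [hgo i j hij, hgo j i (Ne.symm hij)]
      ring
  -- B part
  have hν : ∀ k, ∃ ν : ℂ, Matrix.toEuclideanLin B (h k) = ν • (h k : Euc n) := hhe
  choose ν hνs using hν
  have hhn : ∀ k, ⟪(h k : Euc n), h k⟫_ℂ ≠ 0 := by
    intro k
    rw [inner_self_eq_norm_sq_to_K]
    exact pow_ne_zero 2 (Complex.ofReal_ne_zero.2 (norm_ne_zero_iff.2 (h.ne_zero k)))
  have hrepr : ∀ (v : Euc n) (k : Fin n),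
      (h.repr v k : ℂ) * ⟪(h k : Euc n), h k⟫_ℂ = ⟪(h k : Euc n), v⟫_ℂ := by
    intro v k
    conv_rhs => rw [← h.sum_repr v]
    rw [inner_sum, Finset.sum_eq_single k]
    · rw [inner_smul_right]
    · intro l _ hl
      rw [inner_smul_right, hho k l (Ne.symm hl), mul_zero]
    · intro hk; exact absurd (Finset.mem_univ k) hk
  have hexp : ∀ i j, ⟪e i, Matrix.toEuclideanLin B (e j)⟫_ℂ
      = ∑ k, (h.repr (e j) k) * (ν k * ⟪e i, h k⟫_ℂ) := by
    intro i j
    conv_lhs => rw [← h.sum_repr (e j)]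
    rw [map_sum, inner_sum]
    refine Finset.sum_congr rfl fun k _ => ?_
    rw [_root_.map_smul, hνs, inner_smul_right, inner_smul_right]
  -- structure of ⟪e i, h k⟫
  have hNγ : ∀ i k, ⟪e i, h k⟫_ℂ = (starRingEnd ℂ) (γ i) * ⟪(g i : Euc n), h k⟫_ℂ := by
    intro i k
    rw [he]
    simp only [inner_smul_left]
  have hconjγ : ∀ i, (starRingEnd ℂ) (γ i)
      = (starRingEnd ℂ) (⟪(g i : Euc n), h 0⟫_ℂ)
        / (‖⟪(g i : Euc n), h 0⟫_ℂ‖ * ‖(g i : Euc n)‖) := by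
    intro i
    rw [hγ]
    simp only []
    rw [map_div₀, _root_.map_mul, Complex.conj_ofReal, Complex.conj_ofReal]
  have hstruct : ∀ i k, ∃ c : ℝ, ⟪e i, h k⟫_ℂ = (c : ℂ) * ⟪(g 0 : Euc n), h k⟫_ℂ := by
    intro i k
    have hM := hMne i 0 (Or.inr rfl)
    have habs : ((‖⟪(g i : Euc n), h 0⟫_ℂ‖ : ℂ)) ≠ 0 := by simpa using hM
    have hgn' : ((‖(g i : Euc n)‖ : ℂ)) ≠ 0 := by exact_mod_cast hgn i
    have hconjM : (starRingEnd ℂ) (⟪(g i : Euc n), h 0⟫_ℂ)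
        = (‖⟪(g i : Euc n), h 0⟫_ℂ‖ : ℂ)^2 / ⟪(g i : Euc n), h 0⟫_ℂ := by
      rw [eq_div_iff hM]
      exact conj_mul_self_aux _
    by_cases hk : k = 0
    · subst hk
      refine ⟨‖⟪(g i : Euc n), h 0⟫_ℂ‖ / (‖(g i : Euc n)‖ * r₀), ?_⟩
      rw [hNγ, hconjγ, hconjM, hr₀']
      exact aux_k0 _ _ _ _ hM habs hgn' hr₀ne
    · by_cases hi : i = 0
      · subst hi
        refine ⟨r₀ / (‖⟪(g 0 : Euc n), h 0⟫_ℂ‖ * ‖(g 0 : Euc n)‖), ?_⟩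
        rw [hNγ, hconjγ, hr₀', Complex.conj_ofReal]
        push_cast
        ring
      · obtain ⟨r, hr⟩ := hratio i k hi hk
        have hM0k := hMne 0 k (Or.inl rfl)
        have hMik : ⟪(g i : Euc n), h k⟫_ℂ
            = r * (⟪(g i : Euc n), h 0⟫_ℂ * ⟪(g 0 : Euc n), h k⟫_ℂ) := by
          rw [div_eq_iff (mul_ne_zero hM hM0k)] at hr
          exact hr
        refine ⟨r * ‖⟪(g i : Euc n), h 0⟫_ℂ‖ / ‖(g i : Euc n)‖, ?_⟩
        rw [hNγ, hconjγ, hconjM, hMik]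
        exact aux_gen _ _ _ _ _ hM habs hgn'
  -- swap identity
  have hNsw : ∀ i j k, (starRingEnd ℂ) (⟪e j, h k⟫_ℂ) * ⟪e i, h k⟫_ℂ
      = (starRingEnd ℂ) (⟪e i, h k⟫_ℂ) * ⟪e j, h k⟫_ℂ := by
    intro i j k
    obtain ⟨ci, hci⟩ := hstruct i k
    obtain ⟨cj, hcj⟩ := hstruct j k
    rw [hci, hcj, _root_.map_mul, _root_.map_mul, Complex.conj_ofReal, Complex.conj_ofReal]
    ring
  have hBpart : ∀ i j, ⟪e i, Matrix.toEuclideanLin B (e j)⟫_ℂ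
      = ⟪e j, Matrix.toEuclideanLin B (e i)⟫_ℂ := by
    intro i j
    rw [hexp i j, hexp j i]
    refine Finset.sum_congr rfl fun k _ => ?_
    have h1 : (h.repr (e j) k : ℂ) = ⟪(h k : Euc n), e j⟫_ℂ / ⟪(h k : Euc n), h k⟫_ℂ := by
      rw [eq_div_iff (hhn k)]
      exact hrepr (e j) k
    have h2 : (h.repr (e i) k : ℂ) = ⟪(h k : Euc n), e i⟫_ℂ / ⟪(h k : Euc n), h k⟫_ℂ := by
      rw [eq_div_iff (hhn k)]
      exact hrepr (e i) k
    have h3 : ⟪(h k : Euc n), e j⟫_ℂ = (starRingEnd ℂ) (⟪e j, h k⟫_ℂ) := by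
      rw [← inner_conj_symm]
    have h4 : ⟪(h k : Euc n), e i⟫_ℂ = (starRingEnd ℂ) (⟪e i, h k⟫_ℂ) := by
      rw [← inner_conj_symm]
    rw [h1, h2, h3, h4]
    linear_combination (ν k / ⟪(h k : Euc n), h k⟫_ℂ) * hNsw i j k
  -- assemble
  have hsym : ∀ i j, ⟪e i, Matrix.toEuclideanLin T (e j)⟫_ℂ
      = ⟪e j, Matrix.toEuclideanLin T (e i)⟫_ℂ := by
    intro i j
    rw [hT]
    simp only [map_add, _root_.map_smul, LinearMap.add_apply, LinearMap.smul_apply,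
      inner_add_right, inner_smul_right]
    rw [hApart i j, hBpart i j]
  refine ⟨U, Matrix.mem_unitaryGroup_iff'.2 hUstar, ?_⟩
  ext i j
  rw [Matrix.transpose_apply, hbridge, hbridge, hsym]
end
end

section
/- Let T = A + iB be an n×n complex matrix (A = (T+T*)/2, B = (T−T*)/(2i) self-adjoint) such that A and B each have n distinct eigenvalues, and suppose T is unitarily equivalent to a complex symmetric matrix. Then for any proper pair of orthogonal bases {g_i}_{i=1}^n and {h_i}_{i=1}^n of eigenvectors of A and of B respectively, the quotient ⟨g_i, h_j⟩ / (⟨g_i, h_1⟩ ⟨g_1, h_j⟩) is a real number for all 2 ≤ i, j ≤ n. -/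
noncomputable section
open scoped InnerProductSpace
open Matrix

namespace RealRatioAux

variable {n : ℕ}

/-- coefficients of an eigenvector vanish against basis eigenvectors of other eigenvalues -/
lemma repr_eq_zero_of_eigen (g : Module.Basis (Fin n) ℂ (Euc n)) (f : Euc n →ₗ[ℂ] Euc n)
    (μ : Fin n → ℂ) (hg : ∀ k, f (g k) = μ k • g k) (lam : ℂ) (v : Euc n)
    (hv : f v = lam • v) : ∀ k, μ k ≠ lam → g.repr v k = 0 := by
  intro k hk
  have h1 : f v = ∑ l, (g.repr v l * μ l) • g l := by
    conv_lhs => rw [← g.sum_repr v]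
    rw [map_sum]
    simp [hg, smul_smul]
  have h2 : lam • v = ∑ l, (lam * g.repr v l) • g l := by
    conv_lhs => rw [← g.sum_repr v]
    rw [Finset.smul_sum]
    simp [smul_smul]
  have e1 := g.repr_sum_self (fun l => g.repr v l * μ l)
  have e2 := g.repr_sum_self (fun l => lam * g.repr v l)
  rw [← h1, hv, h2, e2] at e1
  have h3 := congrFun e1 k
  -- h3 : lam * g.repr v k = g.repr v k * μ k
  by_contra hne
  apply hk
  have : g.repr v k * (μ k - lam) = 0 := by ring_nf; linear_combination -h3
  rcases mul_eq_zero.mp this with h | h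
  · exact absurd h hne
  · linear_combination h

/-- the purely complex-arithmetic key lemma -/
lemma key [NeZero n] (M : Fin n → Fin n → ℂ) (a b : Fin n → ℂ)
    (hrel : ∀ i j, (starRingEnd ℂ) (M i j) = a i * b j * M i j)
    (h0 : ∀ i j, M i j = 0 → i ≠ 0 ∧ j ≠ 0)
    (hr : ∃ r : ℝ, M 0 0 = (r : ℂ)) :
    ∀ i j : Fin n, ∃ r : ℝ, M i j / (M i 0 * M 0 j) = (r : ℂ) := by
  have hM0 : ∀ i, M i 0 ≠ 0 := fun i hip => absurd rfl (h0 i 0 hip).2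
  have hM0' : ∀ j, M 0 j ≠ 0 := fun j hip => absurd rfl (h0 0 j hip).1
  have ha : ∀ i, a i ≠ 0 := by
    intro i hai
    apply hM0 i
    have h := hrel i 0
    rw [hai, zero_mul, zero_mul] at h
    simpa using h
  have hb : ∀ j, b j ≠ 0 := by
    intro j hbj
    apply hM0' j
    have h := hrel 0 j
    rw [hbj, mul_zero, zero_mul] at h
    simpa using h
  have hab : a 0 * b 0 = 1 := by
    obtain ⟨r, hr⟩ := hr
    have h := hrel 0 0
    rw [hr, Complex.conj_ofReal] at h
    have hrne : (r : ℂ) ≠ 0 := hr ▸ hM0 0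
    field_simp at h
    exact h.symm
  intro i j
  rw [← Complex.conj_eq_iff_real]
  rw [map_div₀, _root_.map_mul, hrel i j, hrel i 0, hrel 0 j]
  rw [div_eq_div_iff (by
        exact mul_ne_zero (mul_ne_zero (mul_ne_zero (ha i) (hb 0)) (hM0 i))
          (mul_ne_zero (mul_ne_zero (ha 0) (hb j)) (hM0' j)))
      (mul_ne_zero (hM0 i) (hM0' j))]
  linear_combination (-(M i j * M i 0 * M 0 j * a i * b j)) * hab


/-- eigenvalues of a Hermitian matrix w.r.t. an eigenbasis are real -/
lemma mu_real (A : Matrix (Fin n) (Fin n) ℂ) (hAH : Aᴴ = A)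
    (g : Module.Basis (Fin n) ℂ (Euc n)) (μ : Fin n → ℂ)
    (hge : ∀ k, Matrix.toEuclideanLin A (g k) = μ k • g k) :
    ∀ i, (starRingEnd ℂ) (μ i) = μ i := by
  intro i
  have hsym := (Matrix.isHermitian_iff_isSymmetric (A := A)).mp hAH
  have h := hsym (g i) (g i)
  rw [hge i, inner_smul_left, inner_smul_right] at h
  exact mul_right_cancel₀ (inner_self_ne_zero.mpr (g.ne_zero i)) h

/-- if the spectrum has `n` elements, the eigenvalues of an eigenbasis are distinct -/
lemma mu_injective (A : Matrix (Fin n) (Fin n) ℂ) (g : Module.Basis (Fin n) ℂ (Euc n))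
    (μ : Fin n → ℂ) (hge : ∀ k, Matrix.toEuclideanLin A (g k) = μ k • g k)
    (hspec : (spectrum ℂ A).ncard = n) : Function.Injective μ := by
  have hrange : spectrum ℂ A = Set.range μ := by
    rw [← AlgEquiv.spectrum_eq
      (Matrix.toLinAlgEquiv' : Matrix (Fin n) (Fin n) ℂ ≃ₐ[ℂ] Module.End ℂ (Fin n → ℂ)) A]
    ext lam
    rw [← Module.End.hasEigenvalue_iff_mem_spectrum]
    constructor
    · intro hl
      obtain ⟨v, hv⟩ := hl.exists_hasEigenvector
      have hveq : A *ᵥ v = lam • v := Module.End.mem_eigenspace_iff.mp hv.1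
      set v' : Euc n := (WithLp.equiv 2 (Fin n → ℂ)).symm v with hv'
      have hvE : Matrix.toEuclideanLin A v' = lam • v' := by
        apply (WithLp.equiv 2 (Fin n → ℂ)).injective
        exact hveq
      have hv0' : v' ≠ 0 := by
        intro h0
        exact hv.2 (by rw [← (WithLp.equiv 2 (Fin n → ℂ)).apply_symm_apply v, ← hv', h0]; rfl)
      have hrepr : g.repr v' ≠ 0 := fun h0 => hv0' (by
        have := congrArg (g.repr.symm) h0
        simpa using this)
      obtain ⟨k, hk⟩ : ∃ k, g.repr v' k ≠ 0 := by
        by_contra hall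
        push_neg at hall
        exact hrepr (Finsupp.ext hall)
      refine ⟨k, ?_⟩
      by_contra hne
      exact hk (repr_eq_zero_of_eigen g _ μ hge lam v' hvE k hne)
    · rintro ⟨k, rfl⟩
      apply Module.End.hasEigenvalue_of_hasEigenvector
        (x := (WithLp.equiv 2 (Fin n → ℂ)) (g k))
      constructor
      · rw [Module.End.mem_eigenspace_iff]
        exact congrArg (WithLp.equiv 2 (Fin n → ℂ)) (hge k)
      · intro h0
        exact g.ne_zero k ((WithLp.equiv 2 (Fin n → ℂ)).injective (by rw [h0]; rfl))
  rw [hrange] at hspec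
  have hco : Set.range μ = ↑(Finset.univ.image μ) := by
    simp [Finset.coe_image, Set.image_univ]
  rw [hco, Set.ncard_coe_finset] at hspec
  have hinj := Finset.injOn_of_card_image_eq
    (by rw [hspec, Finset.card_univ, Fintype.card_fin])
  exact fun x y hxy => hinj (Finset.mem_univ x) (Finset.mem_univ y) hxy


/-- the antilinear map `x ↦ V (star x)` fixes each eigenline of `A` -/
lemma conj_eigen (A V : Matrix (Fin n) (Fin n) ℂ) (g : Module.Basis (Fin n) ℂ (Euc n))
    (μ : Fin n → ℂ) (hAH : Aᴴ = A) (hAV : A * V = V * Aᵀ)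
    (hμ : Function.Injective μ) (hμr : ∀ i, (starRingEnd ℂ) (μ i) = μ i)
    (hge : ∀ k, Matrix.toEuclideanLin A (g k) = μ k • g k) :
    ∀ i, ∃ α : ℂ,
      V *ᵥ star ((WithLp.equiv 2 (Fin n → ℂ)) (g i))
        = α • (WithLp.equiv 2 (Fin n → ℂ)) (g i) := by
  intro i
  set p : Fin n → ℂ := (WithLp.equiv 2 (Fin n → ℂ)) (g i) with hp
  have hgm : A *ᵥ p = μ i • p := congrArg (WithLp.equiv 2 (Fin n → ℂ)) (hge i)
  have h2 : Aᵀ *ᵥ star p = μ i • star p := by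
    rw [Matrix.mulVec_transpose, ← hAH, ← Matrix.star_mulVec, hgm, star_smul]
    congr 1
    exact hμr i
  have hw : A *ᵥ (V *ᵥ star p) = μ i • (V *ᵥ star p) := by
    rw [Matrix.mulVec_mulVec, hAV, ← Matrix.mulVec_mulVec, h2, Matrix.mulVec_smul]
  set w : Euc n := (WithLp.equiv 2 (Fin n → ℂ)).symm (V *ᵥ star p) with hwdef
  have hwE : Matrix.toEuclideanLin A w = μ i • w := by
    apply (WithLp.equiv 2 (Fin n → ℂ)).injective
    show A *ᵥ (WithLp.equiv 2 (Fin n → ℂ)) w = μ i • (WithLp.equiv 2 (Fin n → ℂ)) w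
    rw [hwdef, Equiv.apply_symm_apply]
    exact hw
  have hz : ∀ k, k ≠ i → g.repr w k = 0 := fun k hk =>
    repr_eq_zero_of_eigen g _ μ hge (μ i) w hwE k (fun he => hk (hμ he))
  refine ⟨g.repr w i, ?_⟩
  have hw2 : w = g.repr w i • g i := by
    conv_lhs => rw [← g.sum_repr w]
    rw [Finset.sum_eq_single i]
    · intro l _ hl
      rw [hz l hl, zero_smul]
    · intro habs
      exact absurd (Finset.mem_univ i) habs
  calc V *ᵥ star p = (WithLp.equiv 2 (Fin n → ℂ)) w := by
        rw [hwdef, Equiv.apply_symm_apply]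
    _ = g.repr w i • p := by
        conv_lhs => rw [hw2]
        rfl

end RealRatioAux

/-- If `T = A + iB` is UECSM and `A`, `B` each have `n` distinct eigenvalues, then for
every proper pair of orthogonal bases `{g_i}, {h_i}` of eigenvectors of `A` and of `B`,
the quotient `⟨g_i, h_j⟩ / (⟨g_i, h_1⟩⟨g_1, h_j⟩)` is real for all `i, j ≥ 2`. -/
theorem real_ratio_of_uecsm {n : ℕ} [NeZero n] (T A B : Matrix (Fin n) (Fin n) ℂ)
    (hA : A = (2⁻¹ : ℂ) • (T + Tᴴ)) (hB : B = (2 * Complex.I)⁻¹ • (T - Tᴴ))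
    (hAspec : (spectrum ℂ A).ncard = n) (hBspec : (spectrum ℂ B).ncard = n)
    (hT : UECSM T)
    (g h : Module.Basis (Fin n) ℂ (Euc n))
    (hgo : ∀ i j, i ≠ j → ⟪g i, g j⟫_ℂ = 0)
    (hho : ∀ i j, i ≠ j → ⟪h i, h j⟫_ℂ = 0)
    (hge : ∀ i, ∃ μ : ℂ, Matrix.toEuclideanLin A (g i) = μ • g i)
    (hhe : ∀ i, ∃ ν : ℂ, Matrix.toEuclideanLin B (h i) = ν • h i)
    (hp : ProperPair (fun i => g i) (fun i => h i)) :
    ∀ i j : Fin n, i ≠ 0 → j ≠ 0 →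
      ∃ r : ℝ, ⟪g i, h j⟫_ℂ / (⟪g i, h 0⟫_ℂ * ⟪g 0, h j⟫_ℂ) = (r : ℂ) := by
  obtain ⟨U, hU, hUs⟩ := hT
  have hU1 : Uᴴ * U = 1 := by
    have := (Matrix.mem_unitaryGroup_iff').mp hU
    simpa [Matrix.star_eq_conjTranspose] using this
  have hU2 : U * Uᴴ = 1 := by
    have := (Matrix.mem_unitaryGroup_iff).mp hU
    simpa [Matrix.star_eq_conjTranspose] using this
  have cc : ∀ M : Matrix (Fin n) (Fin n) ℂ, Mᵀᴴ = Mᴴᵀ := fun _ => rfl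
  have cch : ∀ M : Matrix (Fin n) (Fin n) ℂ, Mᴴᵀᴴ = Mᵀ := fun M =>
    (cc Mᴴ).trans (congrArg Matrix.transpose (Matrix.conjTranspose_conjTranspose M))
  set V : Matrix (Fin n) (Fin n) ℂ := U * Uᵀ with hVdef
  set Vc : Matrix (Fin n) (Fin n) ℂ := Uᴴᵀ * Uᴴ with hVcdef
  have e1 : Uᴴᵀ * Uᵀ = 1 := by rw [← Matrix.transpose_mul, hU2, Matrix.transpose_one]
  have e2 : Uᵀ * Uᴴᵀ = 1 := by rw [← Matrix.transpose_mul, hU1, Matrix.transpose_one]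
  have hVc1 : Vc * V = 1 := by
    rw [hVcdef, hVdef]
    calc Uᴴᵀ * Uᴴ * (U * Uᵀ) = Uᴴᵀ * (Uᴴ * U) * Uᵀ := by simp only [Matrix.mul_assoc]
      _ = 1 := by rw [hU1, Matrix.mul_one, e1]
  have hVc2 : V * Vc = 1 := by
    rw [hVcdef, hVdef]
    calc U * Uᵀ * (Uᴴᵀ * Uᴴ) = U * (Uᵀ * Uᴴᵀ) * Uᴴ := by simp only [Matrix.mul_assoc]
      _ = 1 := by rw [e2, Matrix.mul_one, hU2]
  have hVH : Vᴴ = Vc := by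
    rw [hVdef, hVcdef, Matrix.conjTranspose_mul]
    rfl
  have hVcH : Vcᴴ = V := by
    rw [hVcdef, hVdef, Matrix.conjTranspose_mul, Matrix.conjTranspose_conjTranspose, cch]
  have hTt : Tᵀ = Vc * T * V := by
    have hUs' : Uᵀ * Tᵀ * Uᴴᵀ = Uᴴ * T * U := by
      rw [← hUs, Matrix.transpose_mul, Matrix.transpose_mul]
      simp only [Matrix.mul_assoc]
    calc Tᵀ = (Uᴴᵀ * Uᵀ) * Tᵀ * (Uᴴᵀ * Uᵀ) := by rw [e1]; simp
      _ = Uᴴᵀ * (Uᵀ * Tᵀ * Uᴴᵀ) * Uᵀ := by simp only [Matrix.mul_assoc]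
      _ = Uᴴᵀ * (Uᴴ * T * U) * Uᵀ := by rw [hUs']
      _ = Vc * T * V := by rw [hVcdef, hVdef]; simp only [Matrix.mul_assoc]
  have hTht : Tᴴᵀ = Vc * Tᴴ * V := by
    have hh := congrArg Matrix.conjTranspose hTt
    rw [Matrix.conjTranspose_mul, hVH] at hh
    rw [Matrix.conjTranspose_mul, hVcH, ← Matrix.mul_assoc] at hh
    exact hh
  have hAH : Aᴴ = A := by
    rw [hA, Matrix.conjTranspose_smul, Matrix.conjTranspose_add,
      Matrix.conjTranspose_conjTranspose]
    rw [show (star (2⁻¹ : ℂ)) = (2⁻¹ : ℂ) by simp, add_comm]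
  have hBH : Bᴴ = B := by
    rw [hB, Matrix.conjTranspose_smul, Matrix.conjTranspose_sub,
      Matrix.conjTranspose_conjTranspose]
    have hst : star ((2 * Complex.I)⁻¹ : ℂ) = -(2 * Complex.I)⁻¹ := by
      simp [Complex.ext_iff]
    rw [hst, neg_smul, ← smul_neg, neg_sub]
  have hsmul : ∀ (c : ℂ) (M : Matrix (Fin n) (Fin n) ℂ),
      Vc * (c • M) * V = c • (Vc * M * V) := by
    intro c M
    rw [Matrix.mul_smul, Matrix.smul_mul]
  have hAt : Aᵀ = Vc * A * V := by
    rw [hA, hsmul, Matrix.transpose_smul]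
    congr 1
    rw [Matrix.transpose_add, hTt, hTht, Matrix.mul_add, Matrix.add_mul]
  have hBt : Bᵀ = Vc * B * V := by
    rw [hB, hsmul, Matrix.transpose_smul]
    congr 1
    rw [Matrix.transpose_sub, hTt, hTht, Matrix.mul_sub, Matrix.sub_mul]
  have hAV : A * V = V * Aᵀ := by
    rw [hAt]
    simp only [← Matrix.mul_assoc]
    rw [hVc2, Matrix.one_mul]
  have hBV : B * V = V * Bᵀ := by
    rw [hBt]
    simp only [← Matrix.mul_assoc]
    rw [hVc2, Matrix.one_mul]
  choose μ hμeq using hge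
  choose ν hνeq using hhe
  have hμr := RealRatioAux.mu_real A hAH g μ hμeq
  have hνr := RealRatioAux.mu_real B hBH h ν hνeq
  have hμinj := RealRatioAux.mu_injective A g μ hμeq hAspec
  have hνinj := RealRatioAux.mu_injective B h ν hνeq hBspec
  choose α hα using RealRatioAux.conj_eigen A V g μ hAH hAV hμinj hμr hμeq
  choose β hβ using RealRatioAux.conj_eigen B V h ν hBH hBV hνinj hνr hνeq
  have hVHV : Vᴴ * V = 1 := by rw [hVH]; exact hVc1
  have hrel : ∀ i j, (starRingEnd ℂ) (⟪g i, h j⟫_ℂ)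
      = star (α i) * β j * ⟪g i, h j⟫_ℂ := by
    intro i j
    set p : Fin n → ℂ := (WithLp.equiv 2 (Fin n → ℂ)) (g i) with hpd
    set q : Fin n → ℂ := (WithLp.equiv 2 (Fin n → ℂ)) (h j) with hqd
    have l1 : star (V *ᵥ star p) ⬝ᵥ (V *ᵥ star q) = p ⬝ᵥ star q := by
      rw [Matrix.star_mulVec, star_star, dotProduct_mulVec,
        Matrix.vecMul_vecMul, hVHV, Matrix.vecMul_one]
    have main : star (star p ⬝ᵥ q) = star (α i) * β j * (star p ⬝ᵥ q) := by
      calc star (star p ⬝ᵥ q) = p ⬝ᵥ star q := by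
            simp [dotProduct, mul_comm]
        _ = star (V *ᵥ star p) ⬝ᵥ (V *ᵥ star q) := l1.symm
        _ = star (α i • p) ⬝ᵥ (β j • q) := by rw [hα i, hβ j]
        _ = star (α i) * β j * (star p ⬝ᵥ q) := by
            rw [star_smul, smul_dotProduct, dotProduct_smul,
              smul_eq_mul, smul_eq_mul]
            ring
    have hin : ⟪g i, h j⟫_ℂ = star p ⬝ᵥ q := by
      simp [hpd, hqd, PiLp.inner_apply, dotProduct, mul_comm]
    rw [hin]
    exact main
  obtain ⟨hr0, hz0⟩ := hp
  intro i j _ _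
  exact RealRatioAux.key (fun i j => ⟪g i, h j⟫_ℂ) (fun i => star (α i)) β
    hrel (fun i j hij => hz0 i j hij) hr0 i j
end
end

section
/- Every 2×2 complex matrix is unitarily equivalent to a complex symmetric matrix. -/
noncomputable section
open Matrix

open Complex Real in
lemma uecsm_of_abs_eq (T : Matrix (Fin 2) (Fin 2) ℂ)
    (h : ‖T 0 1‖ = ‖T 1 0‖) : UECSM T := by
  by_cases hb : T 0 1 = 0
  · have hc : T 1 0 = 0 := by
      rw [hb] at h; simpa using h.symm
    refine ⟨1, one_mem _, ?_⟩
    ext i j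
    fin_cases i <;> fin_cases j <;>
      simp [Matrix.transpose_apply, hb, hc]
  · obtain ⟨ω, hω⟩ := IsAlgClosed.exists_pow_nat_eq (k := ℂ) (T 1 0 / T 0 1) zero_lt_two
    have habs : ‖ω‖ = 1 := by
      have h2 : ‖ω‖ ^ 2 = 1 := by
        rw [← norm_pow, hω, norm_div, ← h, div_self]
        simpa using hb
      nlinarith [norm_nonneg ω]
    have hcon : (starRingEnd ℂ) ω * ω = 1 := by
      rw [mul_comm, Complex.mul_conj]
      norm_cast
      simp [Complex.normSq_eq_norm_sq, habs]
    have hsq : ω * ω * T 0 1 = T 1 0 := by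
      have := hω
      field_simp [pow_two] at this ⊢
      linear_combination this
    have key : T 0 1 * ω = (starRingEnd ℂ) ω * T 1 0 := by
      rw [← hsq]
      linear_combination (-(T 0 1 * ω)) * hcon
    refine ⟨!![1, 0; 0, ω], ?_, ?_⟩
    · rw [Matrix.mem_unitaryGroup_iff']
      ext i j
      fin_cases i <;> fin_cases j <;>
        simp [Matrix.mul_apply, Fin.sum_univ_two, hcon]
    · ext i j
      fin_cases i <;> fin_cases j <;>
        simp [Matrix.mul_apply, Fin.sum_univ_two, Matrix.conjTranspose_apply,
          Matrix.transpose_apply, key]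

/-- Every `2 × 2` complex matrix is unitarily equivalent to a complex symmetric
matrix. -/
theorem uecsm_two_by_two (T : Matrix (Fin 2) (Fin 2) ℂ) : UECSM T := by
  set a := T 0 0 with ha
  set b := T 0 1 with hb
  set c := T 1 0 with hc
  set d := T 1 1 with hd
  set f : ℝ → ℝ := fun t =>
    ‖b * (Real.cos t : ℂ) ^ 2 + c * (Real.sin t : ℂ) ^ 2 +
        Complex.I * (d - a) * (Real.sin t : ℂ) * (Real.cos t : ℂ)‖ ^ 2 -
    ‖c * (Real.cos t : ℂ) ^ 2 + b * (Real.sin t : ℂ) ^ 2 +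
        Complex.I * (a - d) * (Real.sin t : ℂ) * (Real.cos t : ℂ)‖ ^ 2 with hf
  have hcont : Continuous f := by
    apply Continuous.sub <;> apply Continuous.pow <;> apply continuous_norm.comp <;>
      continuity
  have hf0 : f 0 = ‖b‖ ^ 2 - ‖c‖ ^ 2 := by simp [hf]
  have hfpi : f (Real.pi / 2) = -(f 0) := by
    simp [hf, Real.cos_pi_div_two, Real.sin_pi_div_two, hf0]
  have hmem : (0 : ℝ) ∈ Set.uIcc (f 0) (f (Real.pi / 2)) := by
    rw [hfpi, Set.mem_uIcc]
    rcases le_total (f 0) 0 with h | h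
    · left; constructor <;> linarith
    · right; constructor <;> linarith
  obtain ⟨t, -, ht⟩ := intermediate_value_uIcc (hcont.continuousOn) hmem
  obtain ⟨x, y, hxy, hteq⟩ : ∃ x y : ℝ, x ^ 2 + y ^ 2 = 1 ∧
      ‖b * (x : ℂ) ^ 2 + c * (y : ℂ) ^ 2 + Complex.I * (d - a) * (y : ℂ) * (x : ℂ)‖ ^ 2
      = ‖c * (x : ℂ) ^ 2 + b * (y : ℂ) ^ 2 +
          Complex.I * (a - d) * (y : ℂ) * (x : ℂ)‖ ^ 2 := by
    refine ⟨Real.cos t, Real.sin t, Real.cos_sq_add_sin_sq t, ?_⟩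
    have ht' : f t = 0 := ht
    rw [hf] at ht'
    simp only at ht'
    linarith
  set U : Matrix (Fin 2) (Fin 2) ℂ :=
    !![(x : ℂ), -Complex.I * (y : ℂ); -Complex.I * (y : ℂ), (x : ℂ)] with hU
  have hcs : (x : ℂ) ^ 2 + (y : ℂ) ^ 2 = 1 := by exact_mod_cast congrArg (Complex.ofReal) hxy
  have hUmem : U ∈ Matrix.unitaryGroup (Fin 2) ℂ := by
    rw [Matrix.mem_unitaryGroup_iff']
    ext i j
    fin_cases i <;> fin_cases j <;>
      simp [hU, Matrix.mul_apply, Fin.sum_univ_two, Complex.conj_ofReal] <;>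
      first
        | ring1
        | linear_combination hcs
        | linear_combination (-1 : ℂ) * hcs
        | linear_combination (-(y : ℂ) ^ 2) * Complex.I_sq
        | linear_combination ((y : ℂ) ^ 2) * Complex.I_sq
        | linear_combination hcs + (-(y : ℂ) ^ 2) * Complex.I_sq
        | linear_combination hcs + ((y : ℂ) ^ 2) * Complex.I_sq
        | linear_combination (-1 : ℂ) * hcs + (-(y : ℂ) ^ 2) * Complex.I_sq
        | linear_combination (-1 : ℂ) * hcs + ((y : ℂ) ^ 2) * Complex.I_sq
  have hS01 : (Uᴴ * T * U) 0 1 = b * (x : ℂ) ^ 2 + c * (y : ℂ) ^ 2 +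
      Complex.I * (d - a) * (y : ℂ) * (x : ℂ) := by
    simp [hU, Matrix.mul_apply, Fin.sum_univ_two, Matrix.conjTranspose_apply,
      Complex.conj_ofReal, ← ha, ← hb, ← hc, ← hd]
    linear_combination (-(y : ℂ) ^ 2 * c) * Complex.I_sq
  have hS10 : (Uᴴ * T * U) 1 0 = c * (x : ℂ) ^ 2 + b * (y : ℂ) ^ 2 +
      Complex.I * (a - d) * (y : ℂ) * (x : ℂ) := by
    simp [hU, Matrix.mul_apply, Fin.sum_univ_two, Matrix.conjTranspose_apply,
      Complex.conj_ofReal, ← ha, ← hb, ← hc, ← hd]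
    linear_combination (-(y : ℂ) ^ 2 * b) * Complex.I_sq
  have habs : ‖(Uᴴ * T * U) 0 1‖ = ‖(Uᴴ * T * U) 1 0‖ := by
    rw [hS01, hS10]
    nlinarith [norm_nonneg (b * (x : ℂ) ^ 2 + c * (y : ℂ) ^ 2 +
        Complex.I * (d - a) * (y : ℂ) * (x : ℂ)),
      norm_nonneg (c * (x : ℂ) ^ 2 + b * (y : ℂ) ^ 2 +
        Complex.I * (a - d) * (y : ℂ) * (x : ℂ))]
  obtain ⟨V, hVmem, hVsym⟩ := uecsm_of_abs_eq (Uᴴ * T * U) habs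
  refine ⟨U * V, mul_mem hUmem hVmem, ?_⟩
  have hassoc : (U * V)ᴴ * T * (U * V) = Vᴴ * (Uᴴ * T * U) * V := by
    rw [Matrix.conjTranspose_mul]
    noncomm_ring
  rw [hassoc]
  exact hVsym
end
end

section
/- Let T be a 3×3 complex matrix with Cartesian decomposition T = A + iB, where A = (T+T*)/2 and B = (T−T*)/(2i) are self-adjoint. If A has a repeated eigenvalue (i.e., A has fewer than 3 distinct eigenvalues) or B has a repeated eigenvalue, then T is unitarily equivalent to a complex symmetric matrix. -/
noncomputable section
open Matrix

lemma uecsm_of_symm {n : ℕ} {T : Matrix (Fin n) (Fin n) ℂ} (h : Tᵀ = T) : UECSM T :=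
  ⟨1, one_mem _, by simpa using h⟩

lemma uecsm_conj {n : ℕ} (T U : Matrix (Fin n) (Fin n) ℂ)
    (hU : U ∈ Matrix.unitaryGroup (Fin n) ℂ) (h : UECSM (Uᴴ * T * U)) : UECSM T := by
  obtain ⟨V, hV, hsym⟩ := h
  exact ⟨U * V, mul_mem hU hV, by
    simpa [Matrix.conjTranspose_mul, Matrix.mul_assoc] using hsym⟩

lemma uecsm_smul {n : ℕ} (c : ℂ) (hc : c ≠ 0) (T : Matrix (Fin n) (Fin n) ℂ)
    (h : UECSM (c • T)) : UECSM T := by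
  obtain ⟨U, hU, hsym⟩ := h
  refine ⟨U, hU, ?_⟩
  have h2 : (c • (Uᴴ * T * U))ᵀ = c • (Uᴴ * T * U) := by
    simpa [Matrix.mul_smul, Matrix.smul_mul] using hsym
  have := h2
  rw [Matrix.transpose_smul] at this
  exact smul_right_injective _ hc this

def phase (z : ℂ) : ℂ := if z = 0 then 1 else z / (‖z‖ : ℂ)

lemma phase_unit (z : ℂ) : star (phase z) * phase z = 1 := by
  unfold phase
  split_ifs with h
  · simp
  · have habs : (‖z‖ : ℂ) ≠ 0 := by
      simpa using h
    rw [RCLike.star_def]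
    rw [map_div₀, Complex.conj_ofReal]
    field_simp
    rw [mul_comm, Complex.mul_conj, ← Complex.sq_norm]
    push_cast
    ring

lemma phase_mul_real (z : ℂ) : star (star (phase z) * z) = star (phase z) * z := by
  unfold phase
  split_ifs with h
  · simp [h]
  · have habs : (‖z‖ : ℂ) ≠ 0 := by
      simpa using h
    rw [RCLike.star_def, map_div₀, Complex.conj_ofReal]
    rw [div_mul_eq_mul_div, map_div₀, Complex.conj_ofReal, RingHom.map_mul]
    simp only [Complex.conj_conj]
    rw [mul_comm z _]

lemma key (d : Fin 3 → ℂ) (h01 : d 0 = d 1) (B : Matrix (Fin 3) (Fin 3) ℂ) (hB : Bᴴ = B) :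
    UECSM (Matrix.diagonal d + Complex.I • B) := by
  classical
  set M : Matrix (Fin 2) (Fin 2) ℂ := Matrix.of (fun i j => B i.castSucc j.castSucc) with hMdef
  have hMH : M.IsHermitian := by
    ext i j
    show star (M j i) = M i j
    show star (B j.castSucc i.castSucc) = B i.castSucc j.castSucc
    rw [← Matrix.conjTranspose_apply, hB]
  set V : Matrix (Fin 2) (Fin 2) ℂ := (hMH.eigenvectorUnitary : Matrix (Fin 2) (Fin 2) ℂ) with hVdef
  have hV1 : star V * V = 1 := (hMH.eigenvectorUnitary.2).1
  have hV2 : V * star V = 1 := (hMH.eigenvectorUnitary.2).2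
  have hN : star V * M * V = Matrix.diagonal (RCLike.ofReal ∘ hMH.eigenvalues) := by
    calc star V * M * V
        = star V * ((V * Matrix.diagonal (RCLike.ofReal ∘ hMH.eigenvalues) * star V) * V) := by
          have hs := hMH.spectral_theorem; rw [Unitary.conjStarAlgAut_apply] at hs; rw [← hs, Matrix.mul_assoc]
      _ = (star V * V) * Matrix.diagonal (RCLike.ofReal ∘ hMH.eigenvalues) * (star V * V) := by
          noncomm_ring
      _ = _ := by rw [hV1]; simp
  have hN01 : (star V * M * V) 0 1 = 0 := by rw [hN]; simp [Matrix.diagonal]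
  have e00 : (starRingEnd ℂ) (V 0 0) * V 0 0 + (starRingEnd ℂ) (V 1 0) * V 1 0 = 1 := by
    have := congrFun (congrFun hV1 0) 0
    simpa [Matrix.mul_apply, Fin.sum_univ_two, Matrix.one_apply, Matrix.star_apply, RCLike.star_def] using this
  have e01 : (starRingEnd ℂ) (V 0 0) * V 0 1 + (starRingEnd ℂ) (V 1 0) * V 1 1 = 0 := by
    have := congrFun (congrFun hV1 0) 1
    simpa [Matrix.mul_apply, Fin.sum_univ_two, Matrix.one_apply, Matrix.star_apply, RCLike.star_def] using this
  have e10 : (starRingEnd ℂ) (V 0 1) * V 0 0 + (starRingEnd ℂ) (V 1 1) * V 1 0 = 0 := by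
    have := congrFun (congrFun hV1 1) 0
    simpa [Matrix.mul_apply, Fin.sum_univ_two, Matrix.one_apply, Matrix.star_apply, RCLike.star_def] using this
  have e11 : (starRingEnd ℂ) (V 0 1) * V 0 1 + (starRingEnd ℂ) (V 1 1) * V 1 1 = 1 := by
    have := congrFun (congrFun hV1 1) 1
    simpa [Matrix.mul_apply, Fin.sum_univ_two, Matrix.one_apply, Matrix.star_apply, RCLike.star_def] using this
  have n01 : (starRingEnd ℂ) (V 0 0) * (B 0 0 * V 0 1) + (starRingEnd ℂ) (V 1 0) * (B 1 0 * V 0 1)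
      + ((starRingEnd ℂ) (V 0 0) * (B 0 1 * V 1 1) + (starRingEnd ℂ) (V 1 0) * (B 1 1 * V 1 1)) = 0 := by
    have := hN01
    simp only [Matrix.mul_apply, Fin.sum_univ_two, Matrix.star_apply, hMdef, Matrix.of_apply,
      Fin.castSucc_zero, Fin.castSucc_one, RCLike.star_def] at this
    linear_combination this
  set W : Matrix (Fin 3) (Fin 3) ℂ :=
    Matrix.of (fun i j : Fin 3 =>
      if hij : i.val < 2 ∧ j.val < 2 then V ⟨i.1, hij.1⟩ ⟨j.1, hij.2⟩
      else if i = j then 1 else 0) with hWdef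
  have w00 : W 0 0 = V 0 0 := rfl
  have w01 : W 0 1 = V 0 1 := rfl
  have w02 : W 0 2 = 0 := rfl
  have w10 : W 1 0 = V 1 0 := rfl
  have w11 : W 1 1 = V 1 1 := rfl
  have w12 : W 1 2 = 0 := rfl
  have w20 : W 2 0 = 0 := rfl
  have w21 : W 2 1 = 0 := rfl
  have w22 : W 2 2 = 1 := rfl
  have hWW : Wᴴ * W = 1 := by
    ext i j
    fin_cases i <;> fin_cases j <;>
      simp [Matrix.mul_apply, Fin.sum_univ_three, Matrix.one_apply,
        w00, w01, w02, w10, w11, w12, w20, w21, w22,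
        Matrix.conjTranspose_apply, RCLike.star_def] <;>
      first
        | linear_combination e00
        | linear_combination e01
        | linear_combination e10
        | linear_combination e11
  have hWmem : W ∈ Matrix.unitaryGroup (Fin 3) ℂ := by
    rw [Matrix.mem_unitaryGroup_iff']
    rw [Matrix.star_eq_conjTranspose]
    exact hWW
  have hd : ∀ k : Fin 3, k.val < 2 → d k = d 0 := by
    intro k hk
    rcases (by omega : k.val = 0 ∨ k.val = 1) with h | h
    · rw [show k = 0 from Fin.ext h]
    · rw [show k = 1 from Fin.ext h]; exact h01.symm
  have hcomm : Matrix.diagonal d * W = W * Matrix.diagonal d := by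
    ext i j
    rw [Matrix.diagonal_mul, Matrix.mul_diagonal]
    by_cases hij : i = j
    · rw [hij]; ring
    · by_cases h2 : i.val < 2 ∧ j.val < 2
      · rw [hd i h2.1, hd j h2.2]; ring
      · have h0 : W i j = 0 := by
          rw [hWdef]
          show (if hij2 : i.val < 2 ∧ j.val < 2 then V ⟨i.1, hij2.1⟩ ⟨j.1, hij2.2⟩
            else if i = j then 1 else 0) = 0
          rw [dif_neg h2, if_neg hij]
        rw [h0]; ring
  have hDW : Wᴴ * Matrix.diagonal d * W = Matrix.diagonal d := by
    rw [Matrix.mul_assoc, hcomm, ← Matrix.mul_assoc, hWW, one_mul]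
  have hstep2 : Wᴴ * (Matrix.diagonal d + Complex.I • B) * W
      = Matrix.diagonal d + Complex.I • (Wᴴ * B * W) := by
    rw [Matrix.mul_add, Matrix.add_mul, hDW, Matrix.mul_smul, Matrix.smul_mul]
  set B2 : Matrix (Fin 3) (Fin 3) ℂ := Wᴴ * B * W with hB2def
  have hB2H : B2ᴴ = B2 := by
    rw [hB2def]
    rw [Matrix.conjTranspose_mul, Matrix.conjTranspose_mul,
      Matrix.conjTranspose_conjTranspose, hB, Matrix.mul_assoc]
  have hB201 : B2 0 1 = 0 := by
    rw [hB2def]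
    simp only [Matrix.mul_apply, Fin.sum_univ_three, Matrix.conjTranspose_apply,
      w00, w01, w02, w10, w11, w12, w20, w21, w22, RCLike.star_def, map_zero,
      mul_zero, zero_mul, add_zero, zero_add, mul_one, star_zero]
    linear_combination n01
  have hB210 : B2 1 0 = 0 := by
    have h := congrFun (congrFun hB2H 1) 0
    rw [Matrix.conjTranspose_apply] at h
    rw [← h, hB201, star_zero]
  set u : Fin 3 → ℂ := fun k => if k = 2 then 1 else phase (B2 k 2) with hudef
  have hu0 : u 0 = phase (B2 0 2) := rfl
  have hu1 : u 1 = phase (B2 1 2) := rfl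
  have hu2 : u 2 = 1 := rfl
  set E : Matrix (Fin 3) (Fin 3) ℂ := Matrix.diagonal u with hEdef
  have huu : (fun i => (star u) i * u i) = (fun _ : Fin 3 => (1:ℂ)) := by
    funext k
    show star (u k) * u k = 1
    by_cases hk : k = 2
    · rw [hk, hu2]; simp
    · have hk' : u k = phase (B2 k 2) := by simp only [hudef]; rw [if_neg hk]
      rw [hk']
      exact phase_unit _
  have hEE : Eᴴ * E = 1 := by
    rw [hEdef, Matrix.diagonal_conjTranspose, Matrix.diagonal_mul_diagonal, huu,
      Matrix.diagonal_one]
  have hEmem : E ∈ Matrix.unitaryGroup (Fin 3) ℂ := by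
    rw [Matrix.mem_unitaryGroup_iff', Matrix.star_eq_conjTranspose]
    exact hEE
  have hcommE : Matrix.diagonal d * E = E * Matrix.diagonal d := by
    rw [hEdef, Matrix.diagonal_mul_diagonal, Matrix.diagonal_mul_diagonal]
    exact congrArg _ (funext fun k => mul_comm _ _)
  have hDE : Eᴴ * Matrix.diagonal d * E = Matrix.diagonal d := by
    rw [Matrix.mul_assoc, hcommE, ← Matrix.mul_assoc, hEE, one_mul]
  have hstep3 : Eᴴ * (Matrix.diagonal d + Complex.I • B2) * E
      = Matrix.diagonal d + Complex.I • (Eᴴ * B2 * E) := by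
    rw [Matrix.mul_add, Matrix.add_mul, hDE, Matrix.mul_smul, Matrix.smul_mul]
  set B3 : Matrix (Fin 3) (Fin 3) ℂ := Eᴴ * B2 * E with hB3def
  have hB3H : B3ᴴ = B3 := by
    rw [hB3def]
    rw [Matrix.conjTranspose_mul, Matrix.conjTranspose_mul,
      Matrix.conjTranspose_conjTranspose, hB2H, Matrix.mul_assoc]
    rw [hB2def]
    simp only [Matrix.mul_assoc]
  have hEntry : ∀ i j, B3 i j = star (u i) * B2 i j * u j := by
    intro i j
    rw [hB3def, hEdef, Matrix.diagonal_conjTranspose]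
    rw [Matrix.mul_diagonal, Matrix.diagonal_mul, Pi.star_apply]
  have h301 : B3 0 1 = 0 := by rw [hEntry, hB201]; ring
  have h310 : B3 1 0 = 0 := by rw [hEntry, hB210]; ring
  have h302r : star (B3 0 2) = B3 0 2 := by
    rw [hEntry 0 2, hu0, hu2, mul_one]
    exact phase_mul_real _
  have h312r : star (B3 1 2) = B3 1 2 := by
    rw [hEntry 1 2, hu1, hu2, mul_one]
    exact phase_mul_real _
  have herm : ∀ i j, B3 j i = star (B3 i j) := by
    intro i j
    conv_lhs => rw [← hB3H]
    rw [Matrix.conjTranspose_apply]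
  have tri : ∀ k : Fin 3, k = 0 ∨ k = 1 ∨ k = 2 := by decide
  have hreal : ∀ i j : Fin 3, star (B3 i j) = B3 i j := by
    intro i j
    rcases tri i with rfl | rfl | rfl <;> rcases tri j with rfl | rfl | rfl
    · exact (herm 0 0).symm
    · rw [h301, star_zero]
    · exact h302r
    · rw [h310, star_zero]
    · exact (herm 1 1).symm
    · exact h312r
    · rw [herm 0 2, star_star]; exact h302r.symm
    · rw [herm 1 2, star_star]; exact h312r.symm
    · exact (herm 2 2).symm
  have hB3sym : ∀ i j, B3 j i = B3 i j := fun i j => (herm i j).trans (hreal i j)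
  have hsym : (Matrix.diagonal d + Complex.I • B3)ᵀ
      = Matrix.diagonal d + Complex.I • B3 := by
    ext i j
    rw [Matrix.transpose_apply, Matrix.add_apply, Matrix.add_apply,
      Matrix.smul_apply, Matrix.smul_apply, Matrix.diagonal_apply, Matrix.diagonal_apply]
    by_cases hij : i = j
    · subst hij; rfl
    · rw [if_neg hij, if_neg (fun h => hij h.symm), hB3sym i j]
  apply uecsm_conj _ W hWmem
  rw [hstep2]
  apply uecsm_conj _ E hEmem
  rw [hstep3]
  exact uecsm_of_symm hsym

lemma conj_herm {M X : Matrix (Fin 3) (Fin 3) ℂ} (h : Mᴴ = M) :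
    (Xᴴ * M * X)ᴴ = Xᴴ * M * X := by
  rw [Matrix.conjTranspose_mul, Matrix.conjTranspose_mul,
    Matrix.conjTranspose_conjTranspose, h, Matrix.mul_assoc]

lemma main_half (T A B : Matrix (Fin 3) (Fin 3) ℂ) (hAh : Aᴴ = A) (hBh : Bᴴ = B)
    (hT : T = A + Complex.I • B) (hrep : (spectrum ℂ A).ncard < 3) : UECSM T := by
  classical
  have hA : A.IsHermitian := hAh
  -- eigenvalues are not injective
  have hni : ¬ Function.Injective hA.eigenvalues := by
    intro hinj
    have hmem : ∀ k, ((hA.eigenvalues k : ℝ) : ℂ) ∈ spectrum ℂ A := by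
      intro k
      have h1 := hA.eigenvalues_mem_spectrum_real k
      have := (spectrum.algebraMap_mem_iff (R := ℝ) ℂ
        (a := A) (r := hA.eigenvalues k)).mpr h1
      simpa using this
    have hsub : Set.range (fun k => ((hA.eigenvalues k : ℝ) : ℂ)) ⊆ spectrum ℂ A := by
      rintro x ⟨k, rfl⟩; exact hmem k
    have hinj2 : Function.Injective (fun k => ((hA.eigenvalues k : ℝ) : ℂ)) := by
      intro a b h
      simp only [Complex.ofReal_inj] at h
      exact hinj h
    have h3 : (Set.range fun k => ((hA.eigenvalues k : ℝ) : ℂ)).ncard = 3 := by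
      rw [← Nat.card_coe_set_eq, Nat.card_range_of_injective hinj2]
      simp
    have h4 := Set.ncard_le_ncard hsub (Matrix.finite_spectrum A)
    omega
  rw [Function.not_injective_iff] at hni
  obtain ⟨i, j, hij, hne⟩ := hni
  -- a permutation with π 0 = i, π 1 = j
  set π : Equiv.Perm (Fin 3) :=
    (Equiv.swap 1 (Equiv.swap 0 i j)).trans (Equiv.swap 0 i) with hπdef
  have hπ0 : π 0 = i := by
    have h0j : (0 : Fin 3) ≠ Equiv.swap 0 i j := by
      intro h
      apply hne
      have := congrArg (Equiv.swap 0 i) h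
      rw [Equiv.swap_apply_self, Equiv.swap_apply_left] at this
      exact this.symm ▸ rfl
    have h01' : (0 : Fin 3) ≠ 1 := by decide
    show (Equiv.swap 0 i) ((Equiv.swap 1 (Equiv.swap 0 i j)) 0) = i
    rw [Equiv.swap_apply_of_ne_of_ne h01' h0j, Equiv.swap_apply_left]
  have hπ1 : π 1 = j := by
    show (Equiv.swap 0 i) ((Equiv.swap 1 (Equiv.swap 0 i j)) 1) = j
    rw [Equiv.swap_apply_left, Equiv.swap_apply_self]
  -- permutation matrix
  set P : Matrix (Fin 3) (Fin 3) ℂ := (π.symm.toPEquiv.toMatrix : Matrix (Fin 3) (Fin 3) ℂ)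
    with hPdef
  have hPT : Pᴴ = (π.toPEquiv.toMatrix : Matrix (Fin 3) (Fin 3) ℂ) := by
    have h1 : (π.symm.symm.toPEquiv.toMatrix : Matrix (Fin 3) (Fin 3) ℂ)
        = (π.symm.toPEquiv.toMatrix : Matrix (Fin 3) (Fin 3) ℂ)ᵀ := by
      rw [Equiv.toPEquiv_symm, PEquiv.toMatrix_symm]
    rw [Equiv.symm_symm] at h1
    have h2 : Pᴴ = Pᵀ := by
      ext a b
      rw [Matrix.conjTranspose_apply, Matrix.transpose_apply, hPdef,
        PEquiv.toMatrix_apply]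
      split_ifs <;> simp
    rw [h2, hPdef, ← h1]
  have hPP : Pᴴ * P = 1 := by
    rw [hPT, hPdef, ← PEquiv.toMatrix_trans, ← Equiv.toPEquiv_trans]
    simp [PEquiv.toMatrix_refl]
  have hPmem : P ∈ Matrix.unitaryGroup (Fin 3) ℂ := by
    rw [Matrix.mem_unitaryGroup_iff', Matrix.star_eq_conjTranspose]
    exact hPP
  -- conjugating a diagonal matrix by P
  have hPdiag : ∀ c : Fin 3 → ℂ, Pᴴ * Matrix.diagonal c * P
      = Matrix.diagonal (c ∘ π) := by
    intro c
    rw [hPT, hPdef, PEquiv.toMatrix_toPEquiv_mul, PEquiv.mul_toMatrix_toPEquiv,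
      Equiv.symm_symm, Matrix.submatrix_submatrix]
    have : (Matrix.diagonal c).submatrix (π ∘ id) (id ∘ π) = Matrix.diagonal (c ∘ π) := by
      have := Matrix.submatrix_diagonal_equiv c π
      simpa [Function.comp] using this
    exact this
  -- eigenvector unitary
  set U : Matrix (Fin 3) (Fin 3) ℂ := (hA.eigenvectorUnitary : Matrix (Fin 3) (Fin 3) ℂ)
    with hUdef
  have hU1 : star U * U = 1 := (hA.eigenvectorUnitary.2).1
  have hUmem : U ∈ Matrix.unitaryGroup (Fin 3) ℂ := Matrix.mem_unitaryGroup_iff'.mpr hU1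
  have hUAU : Uᴴ * A * U = Matrix.diagonal (RCLike.ofReal ∘ hA.eigenvalues) := by
    rw [← Matrix.star_eq_conjTranspose]
    calc star U * A * U
        = star U * ((U * Matrix.diagonal (RCLike.ofReal ∘ hA.eigenvalues) * star U) * U) := by
          have hs := hA.spectral_theorem; rw [Unitary.conjStarAlgAut_apply] at hs; rw [← hs, Matrix.mul_assoc]
      _ = (star U * U) * Matrix.diagonal (RCLike.ofReal ∘ hA.eigenvalues) * (star U * U) := by
          noncomm_ring
      _ = _ := by rw [hU1]; simp
  refine uecsm_conj T U hUmem ?_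
  refine uecsm_conj _ P hPmem ?_
  have hexp : Pᴴ * (Uᴴ * T * U) * P
      = Matrix.diagonal ((RCLike.ofReal ∘ hA.eigenvalues) ∘ π)
        + Complex.I • (Pᴴ * (Uᴴ * B * U) * P) := by
    rw [hT, Matrix.mul_add, Matrix.add_mul, Matrix.mul_smul, Matrix.smul_mul, hUAU,
      Matrix.mul_add, Matrix.add_mul, Matrix.mul_smul, Matrix.smul_mul, hPdiag]
  rw [hexp]
  refine key _ ?_ _ (conj_herm (conj_herm hBh))
  show (RCLike.ofReal (hA.eigenvalues (π 0)) : ℂ) = RCLike.ofReal (hA.eigenvalues (π 1))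
  rw [hπ0, hπ1]
  exact congrArg _ hij

/-- If `T = A + iB` is a `3 × 3` matrix and `A` or `B` has a repeated eigenvalue
(fewer than `3` distinct eigenvalues), then `T` is unitarily equivalent to a complex
symmetric matrix. -/
theorem uecsm_of_repeated_eigenvalue (T A B : Matrix (Fin 3) (Fin 3) ℂ)
    (hA : A = (2⁻¹ : ℂ) • (T + Tᴴ)) (hB : B = (2 * Complex.I)⁻¹ • (T - Tᴴ))
    (hrep : (spectrum ℂ A).ncard < 3 ∨ (spectrum ℂ B).ncard < 3) :
    UECSM T := by
  have hAh : Aᴴ = A := by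
    rw [hA, Matrix.conjTranspose_smul, Matrix.conjTranspose_add,
      Matrix.conjTranspose_conjTranspose]
    rw [show star ((2⁻¹ : ℂ)) = (2⁻¹ : ℂ) by simp, add_comm]
  have hBh : Bᴴ = B := by
    rw [hB, Matrix.conjTranspose_smul, Matrix.conjTranspose_sub,
      Matrix.conjTranspose_conjTranspose]
    rw [show star (((2 * Complex.I)⁻¹ : ℂ)) = -(2 * Complex.I)⁻¹ by
      simp [← inv_neg]]
    rw [neg_smul, ← smul_neg, neg_sub]
  have hT : T = A + Complex.I • B := by
    rw [hA, hB, smul_smul]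
    rw [show Complex.I * (2 * Complex.I)⁻¹ = (2⁻¹ : ℂ) by
      field_simp]
    rw [← smul_add]
    rw [show T + Tᴴ + (T - Tᴴ) = (2 : ℂ) • T by
      ext i j
      simp [Matrix.add_apply, Matrix.sub_apply]
      ring]
    rw [smul_smul]
    norm_num
  rcases hrep with h | h
  · exact main_half T A B hAh hBh hT h
  · have hT' : (-Complex.I) • T = B + Complex.I • (-A) := by
      rw [hT, smul_add, smul_smul]
      rw [show -Complex.I * Complex.I = 1 by
        rw [neg_mul, Complex.I_mul_I, neg_neg]]
      rw [one_smul, smul_neg, ← neg_smul, add_comm]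
    have hAh' : (-A)ᴴ = -A := by rw [Matrix.conjTranspose_neg, hAh]
    have h2 := main_half ((-Complex.I) • T) B (-A) hBh hAh' hT' h
    exact uecsm_smul _ (neg_ne_zero.mpr Complex.I_ne_zero) T h2
end
end

section
/- Let T be a 3×3 complex matrix with Cartesian decomposition T = A + iB, where A = (T+T*)/2 and B = (T−T*)/(2i) are self-adjoint. If A and B share a common eigenvector (a nonzero v ∈ ℂ³ that is an eigenvector of both A and B), then T is unitarily equivalent to a complex symmetric matrix. -/
noncomputable section
open Matrix

lemma exists_z (b m : ℂ) (hb : b ≠ 0) :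
    ∃ z : ℂ, b * (1 + z ^ 2) = m * (z - (starRingEnd ℂ) z) := by
  set w : ℂ := 2 * Complex.I * m / b with hw
  set x : ℝ := w.im / 2 with hx
  set s : ℝ := Real.sqrt (w.re ^ 2 + 4 + 4 * x ^ 2) with hs
  set y : ℝ := (s - w.re) / 2 with hy
  refine ⟨⟨x, y⟩, ?_⟩
  have hs2 : s ^ 2 = w.re ^ 2 + 4 + 4 * x ^ 2 := Real.sq_sqrt (by positivity)
  have h1 : (1 + (⟨x, y⟩ : ℂ) ^ 2) = w * (y : ℝ) := by
    apply Complex.ext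
    · simp [Complex.add_re, pow_two, Complex.mul_re, Complex.mul_im]
      have hsy : 2*y + w.re = s := by rw [hy]; ring
      have hkey : (2*y + w.re)^2 = w.re^2 + 4 + 4*x^2 := by rw [hsy]; exact hs2
      linear_combination (-1/4 : ℝ) * hkey
    · simp [Complex.add_im, pow_two, Complex.mul_re, Complex.mul_im]
      ring
  have h2 : ((⟨x, y⟩ : ℂ) - (starRingEnd ℂ) ⟨x, y⟩) = 2 * (y : ℝ) * Complex.I := by
    rw [Complex.sub_conj]
    norm_num
  rw [h1, h2]
  have hbw : b * w = 2 * Complex.I * m := by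
    rw [hw]; field_simp
  calc b * (w * (y:ℝ)) = (b * w) * (y:ℝ) := by ring
    _ = m * (2 * (y:ℝ) * Complex.I) := by rw [hbw]; ring

lemma V0_unitary (z : ℂ) :
    ((((Real.sqrt (1 + Complex.normSq z))⁻¹ : ℝ) : ℂ) •
      (!![1, -(starRingEnd ℂ) z; z, 1] : Matrix (Fin 2) (Fin 2) ℂ)) ∈
      Matrix.unitaryGroup (Fin 2) ℂ := by
  set c : ℝ := (Real.sqrt (1 + Complex.normSq z))⁻¹ with hc
  rw [Matrix.mem_unitaryGroup_iff']
  have h0 : (0:ℝ) < 1 + Complex.normSq z := by nlinarith [Complex.normSq_nonneg z]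
  have hcc : (c : ℂ) * (c : ℂ) * ((1 + Complex.normSq z : ℝ) : ℂ) = 1 := by
    rw [← Complex.ofReal_mul, ← Complex.ofReal_mul, ← Complex.ofReal_one]
    congr 1
    rw [hc, ← Real.sqrt_inv, Real.mul_self_sqrt (inv_nonneg.mpr h0.le), inv_mul_cancel₀ h0.ne']
  have hV0 : (!![1, -(starRingEnd ℂ) z; z, 1] : Matrix (Fin 2) (Fin 2) ℂ)ᴴ *
      !![1, -(starRingEnd ℂ) z; z, 1] = ((1 + Complex.normSq z : ℝ) : ℂ) • 1 := by
    ext i j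
    fin_cases i <;> fin_cases j <;>
      simp [Matrix.mul_apply, Fin.sum_univ_two, Matrix.one_apply, Complex.normSq_eq_conj_mul_self] <;>
      ring
  rw [Matrix.star_eq_conjTranspose, Matrix.conjTranspose_smul, Matrix.smul_mul, Matrix.mul_smul,
    hV0, Complex.star_def, Complex.conj_ofReal, smul_smul, smul_smul, hcc, one_smul]

lemma two_uecsm_tri (a b d : ℂ) :
    ∃ V ∈ Matrix.unitaryGroup (Fin 2) ℂ,
      ((Vᴴ * !![a, b; 0, d] * V)ᵀ = Vᴴ * !![a, b; 0, d] * V) := by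
  by_cases hb : b = 0
  · refine ⟨1, one_mem _, ?_⟩
    subst hb
    rw [Matrix.conjTranspose_one, Matrix.mul_one, Matrix.one_mul]
    ext i j
    fin_cases i <;> fin_cases j <;> simp
  · obtain ⟨z, key⟩ := exists_z b (d - a) hb
    set c : ℝ := (Real.sqrt (1 + Complex.normSq z))⁻¹ with hc
    set V0 : Matrix (Fin 2) (Fin 2) ℂ := !![1, -(starRingEnd ℂ) z; z, 1] with hV0
    refine ⟨(c : ℂ) • V0, V0_unitary z, ?_⟩
    rw [Matrix.conjTranspose_smul, Complex.star_def, Complex.conj_ofReal]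
    simp only [Matrix.smul_mul, Matrix.mul_smul, Matrix.transpose_smul]
    congr 1
    congr 1
    ext i j
    fin_cases i <;> fin_cases j <;>
      simp [Matrix.mul_apply, Fin.sum_univ_two, hV0] <;>
      first
      | linear_combination key
      | linear_combination -key


lemma exists_unitary_col {n : ℕ} [NeZero n] (v : Euc n) (hv : ‖v‖ = 1) :
    ∃ U : Matrix (Fin n) (Fin n) ℂ, U ∈ Matrix.unitaryGroup (Fin n) ℂ ∧ ∀ i, U i 0 = v i := by
  have hon : Orthonormal ℂ (({0} : Set (Fin n)).restrict fun _ : Fin n => v) := by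
    rw [orthonormal_iff_ite]
    rintro ⟨i, hi⟩ ⟨j, hj⟩
    simp only [Set.mem_singleton_iff] at hi hj
    subst hi; subst hj
    have h1 : (inner ℂ v v : ℂ) = 1 := by
      rw [inner_self_eq_norm_sq_to_K, hv]; norm_num
    rw [PiLp.inner_apply] at h1
    simp [Set.restrict, hv]
  obtain ⟨b, hb⟩ := hon.exists_orthonormalBasis_extension_of_card_eq
    (by simp [finrank_euclideanSpace])
  have hb0 : b 0 = v := hb 0 rfl
  refine ⟨Matrix.of fun i j => b j i, ?_, fun i => by simp [hb0]⟩
  rw [Matrix.mem_unitaryGroup_iff']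
  ext j k
  have horth := orthonormal_iff_ite.mp b.orthonormal j k
  rw [PiLp.inner_apply] at horth
  simp only [Matrix.mul_apply, Matrix.star_apply, Matrix.of_apply, Matrix.one_apply]
  simpa [RCLike.inner_apply, mul_comm] using horth

lemma col_struct {n : ℕ} [NeZero n] (U T : Matrix (Fin n) (Fin n) ℂ)
    (hU : U ∈ Matrix.unitaryGroup (Fin n) ℂ) (lam : ℂ)
    (hT : T.mulVec (fun i => U i 0) = lam • (fun i => U i 0)) (i : Fin n) :
    (Uᴴ * T * U) i 0 = lam * (1 : Matrix (Fin n) (Fin n) ℂ) i 0 := by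
  have hUU : Uᴴ * U = 1 := by
    rw [← Matrix.star_eq_conjTranspose]
    exact (Matrix.mem_unitaryGroup_iff'.mp hU)
  have h1 : ∀ k, (T * U) k 0 = lam * U k 0 := by
    intro k
    have := congrFun hT k
    simp only [Matrix.mulVec, dotProduct, Pi.smul_apply, smul_eq_mul] at this
    simpa [Matrix.mul_apply] using this
  calc (Uᴴ * T * U) i 0 = ∑ k, Uᴴ i k * (T * U) k 0 := by
        rw [Matrix.mul_assoc]; rw [Matrix.mul_apply]
    _ = lam * ∑ k, Uᴴ i k * U k 0 := by
        rw [Finset.mul_sum]; congr 1; ext k; rw [h1]; ring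
    _ = lam * (1 : Matrix (Fin n) (Fin n) ℂ) i 0 := by rw [← Matrix.mul_apply, hUU]

lemma row_struct {n : ℕ} [NeZero n] (U T : Matrix (Fin n) (Fin n) ℂ)
    (hU : U ∈ Matrix.unitaryGroup (Fin n) ℂ) (lam : ℂ)
    (hT : Tᴴ.mulVec (fun i => U i 0) = lam • (fun i => U i 0)) (j : Fin n) :
    (Uᴴ * T * U) 0 j = (starRingEnd ℂ) lam * (1 : Matrix (Fin n) (Fin n) ℂ) 0 j := by
  have hUU : Uᴴ * U = 1 := by
    rw [← Matrix.star_eq_conjTranspose]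
    exact (Matrix.mem_unitaryGroup_iff'.mp hU)
  have h1 : ∀ l, (Uᴴ * T) 0 l = (starRingEnd ℂ) lam * (starRingEnd ℂ) (U l 0) := by
    intro l
    have := congrFun hT l
    simp only [Matrix.mulVec, dotProduct, Pi.smul_apply, smul_eq_mul,
      Matrix.conjTranspose_apply] at this
    have h2 := congrArg (starRingEnd ℂ) this
    simp only [map_sum, _root_.map_mul, Complex.conj_conj, Complex.star_def] at h2
    rw [Matrix.mul_apply]
    rw [← h2]
    congr 1; ext k
    simp [Matrix.conjTranspose_apply, Complex.star_def, mul_comm]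
  calc (Uᴴ * T * U) 0 j = ∑ l, (Uᴴ * T) 0 l * U l j := by rw [Matrix.mul_apply]
    _ = (starRingEnd ℂ) lam * ∑ l, Uᴴ 0 l * U l j := by
        rw [Finset.mul_sum]; congr 1; ext l; rw [h1]; simp [Matrix.conjTranspose_apply]; ring
    _ = (starRingEnd ℂ) lam * (1 : Matrix (Fin n) (Fin n) ℂ) 0 j := by
        rw [← Matrix.mul_apply, hUU]

lemma toEuclideanLin_eigen_mulVec {n : ℕ} (S : Matrix (Fin n) (Fin n) ℂ) (v : Euc n) (lam : ℂ)
    (h : Matrix.toEuclideanLin S v = lam • v) :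
    S.mulVec (fun i => v i) = lam • (fun i => v i) := by
  funext i
  have := congrFun (congrArg (WithLp.equiv 2 (Fin n → ℂ)) h) i
  simpa [Matrix.ofLp_toEuclideanLin_apply] using this

lemma two_uecsm (S : Matrix (Fin 2) (Fin 2) ℂ) :
    ∃ V ∈ Matrix.unitaryGroup (Fin 2) ℂ, ((Vᴴ * S * V)ᵀ = Vᴴ * S * V) := by
  obtain ⟨lam, hlam⟩ := Module.End.exists_eigenvalue (Matrix.toEuclideanLin S)
  obtain ⟨v, hv⟩ := hlam.exists_hasEigenvector
  have hv0 : v ≠ 0 := hv.right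
  have hveq : Matrix.toEuclideanLin S v = lam • v := hv.apply_eq_smul
  set u : Euc 2 := ‖v‖⁻¹ • v with hu
  have hu1 : ‖u‖ = 1 := norm_smul_inv_norm hv0
  have hueq : Matrix.toEuclideanLin S u = lam • u := by
    rw [hu, LinearMap.map_smul_of_tower, hveq, smul_comm]
  have humv : S.mulVec (fun i => u i) = lam • (fun i => u i) :=
    toEuclideanLin_eigen_mulVec S u lam hueq
  obtain ⟨U, hUmem, hUcol⟩ := exists_unitary_col u hu1
  have hcolfun : (fun i => U i 0) = fun i => u i := funext fun i => hUcol i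
  have hcol := fun i => col_struct U S hUmem lam (by rw [hcolfun]; exact humv) i
  set M := Uᴴ * S * U with hM
  have h10 : M 1 0 = 0 := by simpa [Matrix.one_apply] using hcol 1
  have htri : M = !![M 0 0, M 0 1; 0, M 1 1] := by
    ext i j
    fin_cases i <;> fin_cases j <;> simp [h10]
  obtain ⟨V2, hV2mem, hV2sym⟩ := two_uecsm_tri (M 0 0) (M 0 1) (M 1 1)
  refine ⟨U * V2, mul_mem hUmem hV2mem, ?_⟩
  have : (U * V2)ᴴ * S * (U * V2) = V2ᴴ * M * V2 := by
    rw [Matrix.conjTranspose_mul, hM]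
    noncomm_ring
  rw [this, htri]
  exact hV2sym

lemma W_unitary (V2 : Matrix (Fin 2) (Fin 2) ℂ) (hV2 : V2 ∈ Matrix.unitaryGroup (Fin 2) ℂ) :
    (!![1,0,0; 0, V2 0 0, V2 0 1; 0, V2 1 0, V2 1 1] : Matrix (Fin 3) (Fin 3) ℂ) ∈
      Matrix.unitaryGroup (Fin 3) ℂ := by
  rw [Matrix.mem_unitaryGroup_iff']
  have h := Matrix.mem_unitaryGroup_iff'.mp hV2
  have he : ∀ a b, (star V2 * V2) a b = (1 : Matrix (Fin 2) (Fin 2) ℂ) a b := fun a b => by rw [h]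
  simp only [Matrix.mul_apply, Fin.sum_univ_two, Matrix.star_apply, Matrix.one_apply,
    Complex.star_def] at he
  have e00 := he 0 0
  have e01 := he 0 1
  have e10 := he 1 0
  have e11 := he 1 1
  norm_num at e00 e01 e10 e11
  ext i j
  simp only [Matrix.mul_apply, Fin.sum_univ_three, Matrix.star_apply, Matrix.one_apply,
    Complex.star_def]
  fin_cases i <;> fin_cases j <;>
    norm_num [Matrix.vecHead, Matrix.vecTail, Fin.ext_iff, Matrix.cons_val_two] <;>
    first
      | linear_combination e00
      | linear_combination e01
      | linear_combination e10
      | linear_combination e11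

lemma WMW_symm (M : Matrix (Fin 3) (Fin 3) ℂ) (V2 : Matrix (Fin 2) (Fin 2) ℂ)
    (h10 : M 1 0 = 0) (h20 : M 2 0 = 0) (h01 : M 0 1 = 0) (h02 : M 0 2 = 0)
    (hsym : ((V2ᴴ * !![M 1 1, M 1 2; M 2 1, M 2 2] * V2)ᵀ =
      V2ᴴ * !![M 1 1, M 1 2; M 2 1, M 2 2] * V2)) :
    letI W : Matrix (Fin 3) (Fin 3) ℂ := !![1,0,0; 0, V2 0 0, V2 0 1; 0, V2 1 0, V2 1 1]
    (Wᴴ * M * W)ᵀ = Wᴴ * M * W := by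
  have hs := congrFun (congrFun hsym 0) 1
  norm_num [Matrix.transpose_apply, Matrix.mul_apply, Fin.sum_univ_two,
    Matrix.conjTranspose_apply, Complex.star_def] at hs
  ext i j
  simp only [Matrix.transpose_apply, Matrix.mul_apply, Fin.sum_univ_three,
    Matrix.conjTranspose_apply, Complex.star_def]
  fin_cases i <;> fin_cases j <;>
    norm_num [Matrix.vecHead, Matrix.vecTail, h10, h20, h01, h02, Matrix.cons_val_two] <;>
    first
      | linear_combination hs
      | linear_combination -hs

/-- If `T = A + iB` is a `3 × 3` matrix and `A` and `B` share a common eigenvector,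
then `T` is unitarily equivalent to a complex symmetric matrix. -/
theorem uecsm_of_common_eigenvector (T A B : Matrix (Fin 3) (Fin 3) ℂ)
    (hA : A = (2⁻¹ : ℂ) • (T + Tᴴ)) (hB : B = (2 * Complex.I)⁻¹ • (T - Tᴴ))
    (hcommon : ∃ v : Euc 3, v ≠ 0 ∧ (∃ μ : ℂ, Matrix.toEuclideanLin A v = μ • v) ∧
      (∃ ν : ℂ, Matrix.toEuclideanLin B v = ν • v)) :
    UECSM T := by
  obtain ⟨v, hv0, ⟨μ, hμ⟩, ⟨ν, hν⟩⟩ := hcommon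
  have hI : Complex.I * (2 * Complex.I)⁻¹ = 2⁻¹ := by
    rw [mul_inv, Complex.inv_I]
    field_simp
    simp
  have hTeq : T = A + Complex.I • B := by
    rw [hA, hB]
    ext i j
    simp only [Matrix.add_apply, Matrix.smul_apply, Matrix.sub_apply, smul_eq_mul, ← mul_assoc, hI]
    ring
  have hTHeq : Tᴴ = A - Complex.I • B := by
    rw [hA, hB]
    ext i j
    simp only [Matrix.sub_apply, Matrix.smul_apply, Matrix.add_apply, smul_eq_mul, ← mul_assoc, hI]
    ring
  set u : Euc 3 := ‖v‖⁻¹ • v with hu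
  have hu1 : ‖u‖ = 1 := norm_smul_inv_norm hv0
  have hAu : Matrix.toEuclideanLin A u = μ • u := by
    rw [hu, LinearMap.map_smul_of_tower, hμ, smul_comm]
  have hBu : Matrix.toEuclideanLin B u = ν • u := by
    rw [hu, LinearMap.map_smul_of_tower, hν, smul_comm]
  have hAmv := toEuclideanLin_eigen_mulVec A u μ hAu
  have hBmv := toEuclideanLin_eigen_mulVec B u ν hBu
  have hTmv : T.mulVec (fun i => u i) = (μ + Complex.I * ν) • (fun i => u i) := by
    rw [hTeq, Matrix.add_mulVec, Matrix.smul_mulVec, hAmv, hBmv]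
    funext i
    simp only [Pi.add_apply, Pi.smul_apply, smul_eq_mul]
    ring
  have hTHmv : Tᴴ.mulVec (fun i => u i) = (μ - Complex.I * ν) • (fun i => u i) := by
    rw [hTHeq, Matrix.sub_mulVec, Matrix.smul_mulVec, hAmv, hBmv]
    funext i
    simp only [Pi.sub_apply, Pi.smul_apply, smul_eq_mul]
    ring
  obtain ⟨U, hUmem, hUcol⟩ := exists_unitary_col u hu1
  have hcolfun : (fun i => U i 0) = fun i => u i := funext hUcol
  set M := Uᴴ * T * U with hM
  have hcol := fun i => col_struct U T hUmem (μ + Complex.I * ν) (by rw [hcolfun]; exact hTmv) i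
  have hrow := fun j => row_struct U T hUmem (μ - Complex.I * ν) (by rw [hcolfun]; exact hTHmv) j
  have h10 : M 1 0 = 0 := by simpa [Matrix.one_apply] using hcol 1
  have h20 : M 2 0 = 0 := by simpa [Matrix.one_apply] using hcol 2
  have h01 : M 0 1 = 0 := by simpa [Matrix.one_apply] using hrow 1
  have h02 : M 0 2 = 0 := by simpa [Matrix.one_apply] using hrow 2
  obtain ⟨V2, hV2mem, hV2sym⟩ := two_uecsm !![M 1 1, M 1 2; M 2 1, M 2 2]
  refine ⟨U * !![1,0,0; 0, V2 0 0, V2 0 1; 0, V2 1 0, V2 1 1],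
    mul_mem hUmem (W_unitary V2 hV2mem), ?_⟩
  have hconv : (U * !![1,0,0; 0, V2 0 0, V2 0 1; 0, V2 1 0, V2 1 1])ᴴ * T *
      (U * !![1,0,0; 0, V2 0 0, V2 0 1; 0, V2 1 0, V2 1 1]) =
      !![1,0,0; 0, V2 0 0, V2 0 1; 0, V2 1 0, V2 1 1]ᴴ * M *
      !![1,0,0; 0, V2 0 0, V2 0 1; 0, V2 1 0, V2 1 1] := by
    rw [Matrix.conjTranspose_mul, hM]
    noncomm_ring
  rw [hconv]
  exact WMW_symm M V2 h10 h20 h01 h02 hV2sym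
end
end

section
/- Let T be a 3×3 complex matrix with Cartesian decomposition T = A + iB (A, B self-adjoint), and suppose A and B each have 3 distinct eigenvalues and do not share a common eigenvector. Then for any orthogonal bases {g_i} and {h_i} of ℂ³ consisting of eigenvectors of A and of B respectively, the 3×3 matrix M = (⟨g_i, h_j⟩) has at most one zero entry, and there exist permutations σ, τ of {1,2,3} and a unimodular complex number ω such that the reordered and rescaled bases {ω g_{σ(1)}, g_{σ(2)}, g_{σ(3)}} and {h_{τ(1)}, h_{τ(2)}, h_{τ(3)}} form a proper pair. -/
noncomputable section
open scoped InnerProductSpace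
open Matrix

private lemma fin3_third : ∀ j j' : Fin 3, j ≠ j' → ∃ k : Fin 3, k ≠ j ∧ k ≠ j' := by decide

private lemma fin3_mem : ∀ j j' k b : Fin 3, j ≠ j' → k ≠ j → k ≠ j' → b ≠ k → b = j ∨ b = j' := by decide

private lemma inner_basis (h : Module.Basis (Fin 3) ℂ (Euc 3))
    (hho : ∀ i j, i ≠ j → ⟪h i, h j⟫_ℂ = 0) (v : Euc 3) (j : Fin 3) :
    ⟪h j, v⟫_ℂ = h.repr v j * ⟪h j, h j⟫_ℂ := by
  conv_lhs => rw [← h.sum_repr v]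
  rw [inner_sum]
  simp_rw [inner_smul_right]
  rw [Finset.sum_eq_single_of_mem j (Finset.mem_univ j)]
  intro b _ hb
  rw [hho j b (Ne.symm hb), mul_zero]

private lemma sw (x y : Euc 3) (hz : ⟪x, y⟫_ℂ = 0) : ⟪y, x⟫_ℂ = 0 := by
  rw [← inner_conj_symm, hz, map_zero]

private lemma repr_zero (h : Module.Basis (Fin 3) ℂ (Euc 3))
    (hho : ∀ i j, i ≠ j → ⟪h i, h j⟫_ℂ = 0) (v : Euc 3) (j : Fin 3)
    (hz : ⟪v, h j⟫_ℂ = 0) : h.repr v j = 0 := by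
  have h1 : ⟪h j, v⟫_ℂ = 0 := sw _ _ hz
  have h2 := inner_basis h hho v j
  rw [h1] at h2
  have h3 : ⟪h j, h j⟫_ℂ ≠ 0 := inner_self_ne_zero.mpr (h.ne_zero j)
  exact (mul_eq_zero.mp h2.symm).resolve_right h3

private lemma eq_smul_of_two_orth (h : Module.Basis (Fin 3) ℂ (Euc 3))
    (hho : ∀ i j, i ≠ j → ⟪h i, h j⟫_ℂ = 0)
    (v : Euc 3) {j j' : Fin 3} (hne : j ≠ j')
    (o1 : ⟪v, h j⟫_ℂ = 0) (o2 : ⟪v, h j'⟫_ℂ = 0) :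
    ∃ (k : Fin 3) (c : ℂ), v = c • h k := by
  obtain ⟨k, hk1, hk2⟩ := fin3_third j j' hne
  refine ⟨k, h.repr v k, ?_⟩
  conv_lhs => rw [← h.sum_repr v]
  rw [Finset.sum_eq_single_of_mem k (Finset.mem_univ k)]
  intro b _ hb
  rcases fin3_mem j j' k b hne hk1 hk2 hb with rfl | rfl
  · rw [repr_zero h hho v _ o1, zero_smul]
  · rw [repr_zero h hho v _ o2, zero_smul]

/-- If `T = A + iB` is a `3 × 3` matrix whose Cartesian parts `A`, `B` each have `3`
distinct eigenvalues and share no common eigenvector, then for any orthogonal bases of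
eigenvectors `{g_i}` of `A` and `{h_i}` of `B`, the matrix `M = (⟨g_i, h_j⟩)` has at
most one zero entry, and after reordering both bases and scaling the first vector of
the first by a unimodular constant, they become a proper pair. -/
theorem exists_proper_pair (T A B : Matrix (Fin 3) (Fin 3) ℂ)
    (hA : A = (2⁻¹ : ℂ) • (T + Tᴴ)) (hB : B = (2 * Complex.I)⁻¹ • (T - Tᴴ))
    (hAspec : (spectrum ℂ A).ncard = 3) (hBspec : (spectrum ℂ B).ncard = 3)
    (hnocommon : ¬ ∃ v : Euc 3, v ≠ 0 ∧
      (∃ μ : ℂ, Matrix.toEuclideanLin A v = μ • v) ∧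
      (∃ ν : ℂ, Matrix.toEuclideanLin B v = ν • v))
    (g h : Module.Basis (Fin 3) ℂ (Euc 3))
    (hgo : ∀ i j, i ≠ j → ⟪g i, g j⟫_ℂ = 0)
    (hho : ∀ i j, i ≠ j → ⟪h i, h j⟫_ℂ = 0)
    (hge : ∀ i, ∃ μ : ℂ, Matrix.toEuclideanLin A (g i) = μ • g i)
    (hhe : ∀ i, ∃ ν : ℂ, Matrix.toEuclideanLin B (h i) = ν • h i) :
    {p : Fin 3 × Fin 3 | ⟪g p.1, h p.2⟫_ℂ = 0}.Subsingleton ∧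
    ∃ (σ τ : Equiv.Perm (Fin 3)) (ω : ℂ), ‖ω‖ = 1 ∧
      ProperPair (Function.update (fun i => g (σ i)) 0 (ω • g (σ 0)))
        (fun i => h (τ i)) := by
  have noRow : ∀ i j j', j ≠ j' → ⟪g i, h j⟫_ℂ = 0 → ⟪g i, h j'⟫_ℂ = 0 → False := by
    intro i j j' hne z1 z2
    obtain ⟨k, c, hk⟩ := eq_smul_of_two_orth h hho (g i) hne z1 z2
    obtain ⟨ν, hν⟩ := hhe k
    exact hnocommon ⟨g i, g.ne_zero i, hge i, ν, by rw [hk, LinearMap.map_smul _ _ _, hν, smul_comm]⟩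
  have noCol : ∀ i i' j, i ≠ i' → ⟪g i, h j⟫_ℂ = 0 → ⟪g i', h j⟫_ℂ = 0 → False := by
    intro i i' j hne z1 z2
    obtain ⟨k, c, hk⟩ := eq_smul_of_two_orth g hgo (h j) hne (sw _ _ z1) (sw _ _ z2)
    obtain ⟨μ, hμ⟩ := hge k
    exact hnocommon ⟨h j, h.ne_zero j, ⟨μ, by rw [hk, LinearMap.map_smul _ _ _, hμ, smul_comm]⟩, hhe j⟩
  have key : ∀ i j i' j', ⟪g i, h j⟫_ℂ = 0 → ⟪g i', h j'⟫_ℂ = 0 → i = i' ∧ j = j' := by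
    intro i j i' j' z1 z2
    by_cases hii : i = i'
    · refine ⟨hii, ?_⟩
      by_contra hjj
      exact noRow i j j' hjj z1 (hii ▸ z2)
    · by_cases hjj : j = j'
      · exact (noCol i i' j hii z1 (hjj ▸ z2)).elim
      · obtain ⟨k, hk1, hk2⟩ := fin3_third j j' hjj
        have horth := hgo i i' hii
        have hexp : ⟪g i, g i'⟫_ℂ = h.repr (g i') k * ⟪g i, h k⟫_ℂ := by
          conv_lhs => rw [← h.sum_repr (g i')]
          rw [inner_sum]
          simp_rw [inner_smul_right]
          rw [Finset.sum_eq_single_of_mem k (Finset.mem_univ k)]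
          intro b _ hb
          rcases fin3_mem j j' k b hjj hk1 hk2 hb with rfl | rfl
          · rw [z1, mul_zero]
          · rw [repr_zero h hho (g i') _ z2, zero_mul]
        rw [horth] at hexp
        rcases mul_eq_zero.mp hexp.symm with hc | hz
        · have hz' : ⟪g i', h k⟫_ℂ = 0 := by
            have hib := inner_basis h hho (g i') k
            rw [hc, zero_mul] at hib
            exact sw _ _ hib
          exact (noRow i' j' k (Ne.symm hk2) z2 hz').elim
        · exact (noRow i j k (Ne.symm hk1) z1 hz).elim
  have subs : {p : Fin 3 × Fin 3 | ⟪g p.1, h p.2⟫_ℂ = 0}.Subsingleton := by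
    intro p hp q hq
    obtain ⟨h1, h2⟩ := key p.1 p.2 q.1 q.2 hp hq
    exact Prod.ext h1 h2
  obtain ⟨σ, τ, hgood⟩ : ∃ σ τ : Equiv.Perm (Fin 3),
      ∀ i j, ⟪g (σ i), h (τ j)⟫_ℂ = 0 → i ≠ 0 ∧ j ≠ 0 := by
    by_cases hz : ∃ p : Fin 3 × Fin 3, ⟪g p.1, h p.2⟫_ℂ = 0
    · obtain ⟨⟨i₀, j₀⟩, hp⟩ := hz
      refine ⟨Equiv.swap 1 i₀, Equiv.swap 1 j₀, ?_⟩
      intro i j hzero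
      obtain ⟨h1, h2⟩ := key _ _ _ _ hzero hp
      have hi : i = 1 := by
        have := congrArg (Equiv.swap 1 i₀) h1
        rwa [Equiv.swap_apply_self, Equiv.swap_apply_right] at this
      have hj : j = 1 := by
        have := congrArg (Equiv.swap 1 j₀) h2
        rwa [Equiv.swap_apply_self, Equiv.swap_apply_right] at this
      exact ⟨by rw [hi]; decide, by rw [hj]; decide⟩
    · push_neg at hz
      exact ⟨1, 1, fun i j hzero => absurd hzero (hz ⟨_, _⟩)⟩
  refine ⟨subs, σ, τ, ?_⟩
  set c := ⟪g (σ 0), h (τ 0)⟫_ℂ with hc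
  have hcne : c ≠ 0 := fun h0 => (hgood 0 0 h0).1 rfl
  have habs : ((‖c‖ : ℝ) : ℂ) ≠ 0 := Complex.ofReal_ne_zero.mpr (norm_ne_zero_iff.mpr hcne)
  refine ⟨c / ((‖c‖ : ℝ) : ℂ), ?_, ?_, ?_⟩
  · rw [norm_div, Complex.norm_real, norm_norm,
      div_self (norm_ne_zero_iff.mpr hcne)]
  · refine ⟨‖c‖, ?_⟩
    rw [Function.update_self, inner_smul_left, ← hc]
    rw [map_div₀, Complex.conj_ofReal, div_mul_eq_mul_div]
    have : (starRingEnd ℂ) c * c = ((‖c‖ : ℝ) : ℂ) ^ 2 := by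
      rw [mul_comm, Complex.mul_conj, Complex.normSq_eq_norm_sq]
      push_cast; ring
    rw [this, sq, mul_div_assoc, div_self habs, mul_one]
  · intro i j hzero
    by_cases hi : i = 0
    · subst hi
      rw [Function.update_self, inner_smul_left] at hzero
      rcases mul_eq_zero.mp hzero with hω | hz
    -- hω : conj (c/|c|) = 0
      · rw [map_div₀, Complex.conj_ofReal, div_eq_zero_iff] at hω
        rcases hω with hω | hω
        · exact absurd (by rwa [map_eq_zero] at hω) hcne
        · exact absurd hω habs
      · exact absurd rfl (hgood 0 j hz).1
    · rw [Function.update_of_ne hi] at hzero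
      exact hgood i j hzero
end
end

section
/- Let a, b be nonzero complex numbers and let T be the 3×3 complex matrix with rows (0, b, 0), (0, 0, a), (0, 0, 0). Then T is unitarily equivalent to a complex symmetric matrix if and only if |a| = |b|. -/
set_option maxHeartbeats 2000000

noncomputable section
open Matrix

/-- For nonzero `a, b ∈ ℂ`, the `3 × 3` nilpotent Jordan-type matrix with superdiagonal
entries `b, a` is unitarily equivalent to a complex symmetric matrix iff `|a| = |b|`. -/
theorem uecsm_jordan_iff (a b : ℂ) (ha : a ≠ 0) (hb : b ≠ 0) :
    UECSM !![0, b, 0; 0, 0, a; 0, 0, 0] ↔ ‖a‖ = ‖b‖ := by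
  constructor
  · intro h
    unfold UECSM at h
    obtain ⟨U, hU, hsym⟩ := h
    set T : Matrix (Fin 3) (Fin 3) ℂ := !![0, b, 0; 0, 0, a; 0, 0, 0] with hT
    have hU1 : Uᴴ * U = 1 := mem_unitaryGroup_iff'.mp hU
    have hU2 : U * Uᴴ = 1 := mem_unitaryGroup_iff.mp hU
    set W : Matrix (Fin 3) (Fin 3) ℂ := U * Uᵀ with hW
    have hWsym : Wᵀ = W := by rw [hW, transpose_mul, transpose_transpose]
    have hU1t : Uᵀ * Uᴴᵀ = 1 := by rw [← transpose_mul, hU1, transpose_one]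
    have hU2t : Uᴴᵀ * Uᵀ = 1 := by rw [← transpose_mul, hU2, transpose_one]
    -- step A : T * W = W * Tᵀ
    have h1 : Uᵀ * (Tᵀ * Uᴴᵀ) = Uᴴ * (T * U) := by
      have := hsym
      simp only [transpose_mul, Matrix.mul_assoc] at this ⊢
      exact this
    have hA : T * W = W * Tᵀ := by
      have h2 := congrArg (fun M => U * M * Uᵀ) h1
      simp only [Matrix.mul_assoc] at h2
      rw [hU2t, Matrix.mul_one] at h2
      have h4 : U * (Uᵀ * Tᵀ) = W * Tᵀ := by rw [hW, Matrix.mul_assoc]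
      rw [h4] at h2
      rw [h2, ← Matrix.mul_assoc U Uᴴ, hU2, Matrix.one_mul, hW]
    -- W unitary
    have hWu : W * Wᴴ = 1 := by
      rw [hW, conjTranspose_mul]
      show U * Uᵀ * (Uᴴᵀ * Uᴴ) = 1
      calc U * Uᵀ * (Uᴴᵀ * Uᴴ) = U * (Uᵀ * Uᴴᵀ) * Uᴴ := by
            simp only [Matrix.mul_assoc]
      _ = 1 := by rw [hU1t, Matrix.mul_one, hU2]
    have hWu' : Wᴴ * W = 1 := by
      rw [hW, conjTranspose_mul]
      show Uᴴᵀ * Uᴴ * (U * Uᵀ) = 1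
      calc Uᴴᵀ * Uᴴ * (U * Uᵀ) = Uᴴᵀ * (Uᴴ * U) * Uᵀ := by
            simp only [Matrix.mul_assoc]
      _ = 1 := by rw [hU1, Matrix.mul_one, hU2t]
    -- step C : Tᴴ * W = W * Tᵀᴴ
    have hAH : Wᴴ * Tᴴ = Tᵀᴴ * Wᴴ := by
      calc Wᴴ * Tᴴ = (T * W)ᴴ := (conjTranspose_mul T W).symm
      _ = (W * Tᵀ)ᴴ := by rw [hA]
      _ = Tᵀᴴ * Wᴴ := conjTranspose_mul W Tᵀ
    have hC : Tᴴ * W = W * Tᵀᴴ := by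
      have h3 := congrArg (fun M => W * M * W) hAH
      simp only [Matrix.mul_assoc] at h3
      rw [hWu', Matrix.mul_one, ← Matrix.mul_assoc W Wᴴ, hWu, Matrix.one_mul] at h3
      exact h3
    -- extract entries
    have e01 := congrFun (congrFun hA 0) 1
    have c10 := congrFun (congrFun hC 1) 0
    have c20 := congrFun (congrFun hC 2) 0
    have c12 := congrFun (congrFun hC 1) 2
    have u00 := congrFun (congrFun hWu 0) 0
    simp [hT, Matrix.mul_apply, Fin.sum_univ_three, Matrix.conjTranspose_apply,
      Matrix.transpose_apply, Matrix.one_apply, Complex.star_def, Matrix.vecHead, Matrix.vecTail,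
      Matrix.cons_transpose] at e01 c10 c20 c12 u00
    have hW00 : W 0 0 = 0 := c10.resolve_left hb
    have hW10 : W 1 0 = 0 := c20.resolve_left ha
    have hW01 : W 0 1 = 0 := by
      have h := congrFun (congrFun hWsym 0) 1
      simp only [Matrix.transpose_apply] at h
      rw [← h, hW10]
    rw [hW00, hW01] at u00
    simp only [map_zero, mul_zero, zero_mul, zero_add] at u00
    have hw0 : W 0 2 ≠ 0 := by
      intro h; rw [h] at u00; simp at u00
    have hv0 : W 1 1 ≠ 0 := by
      intro h
      rw [h] at c12
      simp only [zero_mul, mul_eq_zero, map_eq_zero] at c12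
      rcases c12 with h' | h' <;> [exact hb h'; exact hw0 h']
    have key : a * (starRingEnd ℂ) a = b * (starRingEnd ℂ) b := by
      have h5 : (b * (starRingEnd ℂ) b) * (W 1 1 * W 0 2)
          = (a * (starRingEnd ℂ) a) * (W 1 1 * W 0 2) := by
        calc (b * (starRingEnd ℂ) b) * (W 1 1 * W 0 2)
            = (b * W 1 1) * ((starRingEnd ℂ) b * W 0 2) := by ring
        _ = (W 0 2 * a) * (W 1 1 * (starRingEnd ℂ) a) := by rw [e01, c12]
        _ = (a * (starRingEnd ℂ) a) * (W 1 1 * W 0 2) := by ring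
      exact (mul_right_cancel₀ (mul_ne_zero hv0 hw0) h5).symm
    have hnsq : Complex.normSq a = Complex.normSq b := by
      rw [Complex.mul_conj, Complex.mul_conj] at key
      exact_mod_cast key
    rw [Complex.norm_def, Complex.norm_def, hnsq]
  · intro hab
    unfold UECSM
    have h2 : ((Real.sqrt 2 : ℝ) : ℂ) * ((Real.sqrt 2 : ℝ) : ℂ) = 2 := by
      norm_cast; exact Real.mul_self_sqrt (by norm_num)
    obtain ⟨c, hcc, hcr⟩ : ∃ c : ℂ, c * c = 2⁻¹ ∧ (starRingEnd ℂ) c = c :=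
      ⟨(((Real.sqrt 2)⁻¹ : ℝ) : ℂ), by push_cast; rw [← mul_inv, h2], Complex.conj_ofReal _⟩
    obtain ⟨r, haa, hbb, hrr⟩ : ∃ r : ℂ, a * (starRingEnd ℂ) a = r * r ∧
        b * (starRingEnd ℂ) b = r * r ∧ (starRingEnd ℂ) r = r := by
      refine ⟨((‖a‖ : ℝ) : ℂ), ?_, ?_, Complex.conj_ofReal _⟩
      · rw [Complex.mul_conj]; norm_cast; rw [← Complex.sq_norm]; ring
      · rw [Complex.mul_conj, hab]; norm_cast; rw [← Complex.sq_norm]; ring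
    have ha' : (starRingEnd ℂ) a ≠ 0 := by simpa using ha
    have hb' : (starRingEnd ℂ) b ≠ 0 := by simpa using hb
    refine ⟨!![c, 0, Complex.I * c;
               0, r / b, 0;
               (starRingEnd ℂ) b * c / a, 0, -(Complex.I * (starRingEnd ℂ) b * c) / a], ?_, ?_⟩
    · rw [Matrix.mem_unitaryGroup_iff]
      show _ * _ᴴ = _
      ext i j
      fin_cases i <;> fin_cases j <;>
        simp [Matrix.mul_apply, Fin.sum_univ_three, Matrix.conjTranspose_apply,
          Matrix.one_apply, map_div₀, _root_.map_mul, Complex.conj_I,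
          Complex.star_def, hcr, hrr, Fin.ext_iff] <;>
        (try field_simp)
      · linear_combination 2*hcc - c*c*Complex.I_sq
      · linear_combination b*c*c*Complex.I_sq
      · linear_combination -hbb
      · linear_combination (starRingEnd ℂ) b * c * c * Complex.I_sq
      · linear_combination 2*b*(starRingEnd ℂ) b*hcc - b*(starRingEnd ℂ) b*c*c*Complex.I_sq
          + hbb - haa
    · ext i j
      fin_cases i <;> fin_cases j <;>
        simp [Matrix.mul_apply, Fin.sum_univ_three, Matrix.conjTranspose_apply,
          map_div₀, _root_.map_mul, Complex.conj_I, Complex.star_def, hcr, hrr] <;>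
        field_simp <;> ring
end
end

section
/- The 3×3 complex matrix T₂ with rows (0, 7, 0), (0, 1, −5), (0, 0, 3) is not unitarily equivalent to any complex symmetric matrix: there is no 3×3 unitary matrix U such that Uᴴ T₂ U equals its own transpose. -/
noncomputable section
open Matrix

set_option maxHeartbeats 1000000 in
/-- For a symmetric matrix `S` and unitary `U`, the trace of the word `T T Tᴴ T Tᴴ Tᴴ`
in `T = U S Uᴴ` equals the trace of the reversed word. -/
lemma word_trace_eq {n : ℕ} (U S : Matrix (Fin n) (Fin n) ℂ)
    (hU : Uᴴ * U = 1) (hS : Sᵀ = S) :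
    ((U*S*Uᴴ) * (U*S*Uᴴ) * (U*S*Uᴴ)ᴴ * (U*S*Uᴴ) * (U*S*Uᴴ)ᴴ * (U*S*Uᴴ)ᴴ).trace
  = ((U*S*Uᴴ)ᴴ * (U*S*Uᴴ)ᴴ * (U*S*Uᴴ) * (U*S*Uᴴ)ᴴ * (U*S*Uᴴ) * (U*S*Uᴴ)).trace := by
  have hSij : ∀ i j, S i j = S j i := by
    intro i j
    conv_lhs => rw [← hS]
    exact Matrix.transpose_apply S i j
  have hSh : (Sᴴ)ᵀ = Sᴴ := by
    ext i j
    simp only [Matrix.transpose_apply, Matrix.conjTranspose_apply]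
    rw [hSij]
  have hH : (U*S*Uᴴ)ᴴ = U * Sᴴ * Uᴴ := by
    simp [Matrix.conjTranspose_mul, Matrix.mul_assoc]
  have hcol : ∀ A B : Matrix (Fin n) (Fin n) ℂ,
      (U*A*Uᴴ) * (U*B*Uᴴ) = U*(A*B)*Uᴴ := by
    intro A B
    simp only [Matrix.mul_assoc]
    rw [← Matrix.mul_assoc Uᴴ U, hU, Matrix.one_mul]
  have cyc : ∀ X : Matrix (Fin n) (Fin n) ℂ, (U*X*Uᴴ).trace = X.trace := by
    intro X
    rw [Matrix.trace_mul_cycle, hU, Matrix.one_mul]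
  rw [hH, hcol, hcol, hcol, hcol, hcol, hcol, hcol, hcol, hcol, hcol, cyc, cyc]
  rw [← Matrix.trace_transpose (S*S*Sᴴ*S*Sᴴ*Sᴴ)]
  congr 1
  simp only [Matrix.transpose_mul, hS, hSh]
  noncomm_ring

/-- The matrix `T₂` with rows `(0,7,0), (0,1,-5), (0,0,3)` is not unitarily equivalent
to any complex symmetric matrix. -/
theorem not_uecsm_T2 : ¬ UECSM !![(0 : ℂ), 7, 0; 0, 1, -5; 0, 0, 3] := by
  rintro ⟨U, hU, hsym⟩
  set T : Matrix (Fin 3) (Fin 3) ℂ := !![(0 : ℂ), 7, 0; 0, 1, -5; 0, 0, 3] with hTdef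
  have hU1 : Uᴴ * U = 1 := by
    simpa [Matrix.star_eq_conjTranspose] using (Matrix.mem_unitaryGroup_iff'.mp hU)
  have hU2 : U * Uᴴ = 1 := by
    simpa [Matrix.star_eq_conjTranspose] using (Matrix.mem_unitaryGroup_iff.mp hU)
  have hT : U * (Uᴴ * T * U) * Uᴴ = T := by
    calc U * (Uᴴ * T * U) * Uᴴ = (U * Uᴴ) * T * (U * Uᴴ) := by
          simp only [Matrix.mul_assoc]
      _ = T := by rw [hU2, Matrix.one_mul, Matrix.mul_one]
  have key := word_trace_eq U (Uᴴ * T * U) hU1 hsym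
  rw [hT] at key
  have hTH : Tᴴ = !![(0 : ℂ), 0, 0; 7, 1, 0; 0, -5, 3] := by
    ext i j
    fin_cases i <;> fin_cases j <;>
      simp [hTdef, Matrix.conjTranspose_apply, Matrix.vecHead, Matrix.vecTail]
  rw [hTH] at key
  simp only [hTdef, Matrix.mul_fin_three, Matrix.trace_fin_three_of] at key
  norm_num at key
end
end
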